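/- arXiv:2008.03929 — 4 statements merged into one kernel-verified Lean document; each statement's English description precedes it below -/
import Mathlib

section
/- Let M be a nonempty connected topological space equipped with a continuous additive action of ℝⁿ on M (written (t, x) ↦ t • x, satisfying 0 • x = x and (t + s) • x = t • (s • x)). Assume that for every x ∈ M there exists ε > 0 such that the orbit map t ↦ t • x, restricted to the open Euclidean ball B(0, 2ε) ⊂ ℝⁿ, is injective and is an open embedding onto an open subset of M. Then for every x₀ ∈ M the orbit map F : ℝⁿ → M, F(t) = t • x₀, is a surjective covering map. -/
open Topology
/-- Let `M` be a nonempty connected topological space with a continuous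
additive action of `ℝⁿ` such that every orbit map, restricted to a Euclidean ball
`B(0, 2ε)`, is an open embedding into `M`. Then every orbit map
`F : ℝⁿ → M`, `F t = t +ᵥ x₀`, is a surjective covering map. -/
theorem stmt_3 {n : ℕ} {M : Type*} [TopologicalSpace M] [ConnectedSpace M]
    [AddAction (EuclideanSpace ℝ (Fin n)) M]
    [ContinuousVAdd (EuclideanSpace ℝ (Fin n)) M]
    (hloc : ∀ x : M, ∃ ε > (0 : ℝ),
      IsOpenEmbedding ((Metric.ball (0 : EuclideanSpace ℝ (Fin n)) (2 * ε)).restrict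
        (fun t => t +ᵥ x)))
    (x₀ : M) :
    Function.Surjective (fun t : EuclideanSpace ℝ (Fin n) => t +ᵥ x₀) ∧
      IsCoveringMap (fun t : EuclideanSpace ℝ (Fin n) => t +ᵥ x₀) := by
  classical
  have hFc : Continuous fun t : EuclideanSpace ℝ (Fin n) => t +ᵥ x₀ :=
    continuous_id.vadd continuous_const
  -- Surjectivity: the orbit of `x₀` is clopen and nonempty.
  have hsurj : Function.Surjective fun t : EuclideanSpace ℝ (Fin n) => t +ᵥ x₀ := by
    have hO : IsClopen (Set.range fun t : EuclideanSpace ℝ (Fin n) => t +ᵥ x₀) := by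
      constructor
      · rw [← isOpen_compl_iff, isOpen_iff_mem_nhds]
        intro m hm
        obtain ⟨ε, hε, hemb⟩ := hloc m
        have hV : IsOpen ((fun u : EuclideanSpace ℝ (Fin n) => u +ᵥ m) ''
            Metric.ball 0 (2 * ε)) := by
          rw [← Set.range_restrict]; exact hemb.isOpen_range
        refine Filter.mem_of_superset
          (hV.mem_nhds ⟨0, Metric.mem_ball_self (by linarith), zero_vadd _ _⟩) ?_
        rintro v ⟨u, hu, rfl⟩ ⟨t, ht⟩
        have ht' : t +ᵥ x₀ = u +ᵥ m := ht
        refine hm ⟨-u + t, ?_⟩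
        show (-u + t) +ᵥ x₀ = m
        rw [add_vadd, ht', ← add_vadd, neg_add_cancel, zero_vadd]
      · rw [isOpen_iff_mem_nhds]
        rintro m ⟨t, rfl⟩
        obtain ⟨ε, hε, hemb⟩ := hloc (t +ᵥ x₀)
        have hV : IsOpen ((fun u : EuclideanSpace ℝ (Fin n) => u +ᵥ (t +ᵥ x₀)) ''
            Metric.ball 0 (2 * ε)) := by
          rw [← Set.range_restrict]; exact hemb.isOpen_range
        refine Filter.mem_of_superset
          (hV.mem_nhds ⟨0, Metric.mem_ball_self (by linarith), zero_vadd _ _⟩) ?_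
        rintro v ⟨u, hu, rfl⟩
        exact ⟨u + t, add_vadd u t x₀⟩
    have hO' := hO.eq_univ ⟨x₀, ⟨0, zero_vadd _ _⟩⟩
    intro m
    have : m ∈ Set.range fun t : EuclideanSpace ℝ (Fin n) => t +ᵥ x₀ := by
      rw [hO']; trivial
    exact this
  refine ⟨hsurj, ?_⟩
  intro y
  obtain ⟨ε, hε, hemb⟩ := hloc y
  have hball : Metric.ball (0 : EuclideanSpace ℝ (Fin n)) ε ⊆
      Metric.ball 0 (2 * ε) := Metric.ball_subset_ball (by linarith)
  -- injectivity of the orbit map of `y` on the big ball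
  have hginj : ∀ u ∈ Metric.ball (0 : EuclideanSpace ℝ (Fin n)) (2 * ε),
      ∀ v ∈ Metric.ball (0 : EuclideanSpace ℝ (Fin n)) (2 * ε),
      u +ᵥ y = v +ᵥ y → u = v := by
    intro u hu v hv h
    have := hemb.injective (a₁ := ⟨u, hu⟩) (a₂ := ⟨v, hv⟩) h
    exact congrArg Subtype.val this
  -- the partial inverse ψ of the orbit map of `y`
  set ψ : M → EuclideanSpace ℝ (Fin n) := fun m =>
    if h : ∃ u, u ∈ Metric.ball (0 : EuclideanSpace ℝ (Fin n)) (2 * ε) ∧ u +ᵥ y = m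
    then h.choose else 0 with hψdef
  have hψ1 : ∀ u ∈ Metric.ball (0 : EuclideanSpace ℝ (Fin n)) (2 * ε),
      ψ (u +ᵥ y) = u := by
    intro u hu
    have hex : ∃ v, v ∈ Metric.ball (0 : EuclideanSpace ℝ (Fin n)) (2 * ε) ∧
        v +ᵥ y = u +ᵥ y := ⟨u, hu, rfl⟩
    rw [hψdef]
    simp only [dif_pos hex]
    exact hginj _ hex.choose_spec.1 u hu hex.choose_spec.2
  set W : Set M := (fun u : EuclideanSpace ℝ (Fin n) => u +ᵥ y) ''
    Metric.ball 0 (2 * ε) with hWdef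
  have hψcont : ContinuousOn ψ W := by
    rw [continuousOn_iff_continuous_restrict]
    have hrange : ∀ m : W, (m : M) ∈ Set.range
        ((Metric.ball (0 : EuclideanSpace ℝ (Fin n)) (2 * ε)).restrict
          (fun t => t +ᵥ y)) := by
      intro m; obtain ⟨u, hu, hm⟩ := m.2; exact ⟨⟨u, hu⟩, hm⟩
    set e := hemb.isEmbedding.toHomeomorph with hedef
    have hfun : W.restrict ψ = fun m : W =>
        ((e.symm ⟨m.1, hrange m⟩ : ↥(Metric.ball (0 : EuclideanSpace ℝ (Fin n)) (2 * ε)))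
          : EuclideanSpace ℝ (Fin n)) := by
      funext m
      set u : ↥(Metric.ball (0 : EuclideanSpace ℝ (Fin n)) (2 * ε)) :=
        e.symm ⟨m.1, hrange m⟩ with hu
      have h1 : (u : EuclideanSpace ℝ (Fin n)) +ᵥ y = m.1 :=
        congrArg Subtype.val (e.apply_symm_apply ⟨m.1, hrange m⟩)
      have h2 : ψ m.1 = (u : EuclideanSpace ℝ (Fin n)) := by
        rw [← h1, hψ1 _ u.2]
      exact h2
    rw [show W.domRestrict ψ = W.restrict ψ from rfl, hfun]
    refine Continuous.subtype_val ?_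
    exact e.symm.continuous.comp (Continuous.subtype_mk continuous_subtype_val _)
  set U : Set M := (fun u : EuclideanSpace ℝ (Fin n) => u +ᵥ y) ''
    Metric.ball 0 ε with hUdef
  have hUW : U ⊆ W := Set.image_mono hball
  have hψcontU : ContinuousOn ψ U := hψcont.mono hUW
  have hUopen : IsOpen U := by
    have himg : U = ((Metric.ball (0 : EuclideanSpace ℝ (Fin n)) (2 * ε)).restrict
        (fun t => t +ᵥ y)) '' (Subtype.val ⁻¹' Metric.ball 0 ε) := by
      ext m
      constructor
      · rintro ⟨u, hu, rfl⟩; exact ⟨⟨u, hball hu⟩, hu, rfl⟩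
      · rintro ⟨⟨u, hu2⟩, hu, rfl⟩; exact ⟨u, hu, rfl⟩
    rw [himg]
    exact hemb.isOpenMap _ (continuous_subtype_val.isOpen_preimage _ Metric.isOpen_ball)
  have hyU : y ∈ U := ⟨0, Metric.mem_ball_self hε, zero_vadd _ _⟩
  have hψU : ∀ m ∈ U, ψ m ∈ Metric.ball (0 : EuclideanSpace ℝ (Fin n)) ε ∧
      ψ m +ᵥ y = m := by
    rintro m ⟨u, hu, rfl⟩
    rw [hψ1 u (hball hu)]
    exact ⟨hu, rfl⟩
  set S : Set (EuclideanSpace ℝ (Fin n)) :=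
    (fun t : EuclideanSpace ℝ (Fin n) => t +ᵥ x₀) ⁻¹' {y} with hSdef
  -- the fiber is discrete
  have hdisc : DiscreteTopology ↥S := by
    rw [discreteTopology_iff_isOpen_singleton]
    rintro ⟨s, hs⟩
    have hsy : s +ᵥ x₀ = y := hs
    have hsingle : {(⟨s, hs⟩ : S)} = Subtype.val ⁻¹' Metric.ball s (2 * ε) := by
      ext ⟨s', hs'⟩
      simp only [Set.mem_singleton_iff, Set.mem_preimage, Metric.mem_ball,
        Subtype.mk.injEq]
      constructor
      · rintro rfl; simpa using by linarith
      · intro hd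
        have hs'y : s' +ᵥ x₀ = y := hs'
        have h1 : s' - s ∈ Metric.ball (0 : EuclideanSpace ℝ (Fin n)) (2 * ε) := by
          rw [Metric.mem_ball, dist_zero_right]
          simpa [dist_eq_norm] using hd
        have h2 : (s' - s) +ᵥ y = (0 : EuclideanSpace ℝ (Fin n)) +ᵥ y := by
          rw [zero_vadd]
          calc (s' - s) +ᵥ y = (s' - s) +ᵥ (s +ᵥ x₀) := by rw [hsy]
            _ = ((s' - s) + s) +ᵥ x₀ := (add_vadd _ _ _).symm
            _ = s' +ᵥ x₀ := by rw [sub_add_cancel]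
            _ = y := hs'y
        have h3 := hginj _ h1 0 (Metric.mem_ball_self (by linarith)) h2
        exact sub_eq_zero.mp h3
    rw [hsingle]
    exact continuous_subtype_val.isOpen_preimage _ Metric.isOpen_ball
  obtain ⟨t₀, ht₀⟩ := hsurj y
  have ht₀S : t₀ ∈ S := ht₀
  -- membership of the sheet translation in the fiber
  have hmemS : ∀ t : EuclideanSpace ℝ (Fin n), t +ᵥ x₀ ∈ U →
      t - ψ (t +ᵥ x₀) ∈ S := by
    intro t ht
    have h := (hψU _ ht).2
    show (t - ψ (t +ᵥ x₀)) +ᵥ x₀ = y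
    calc (t - ψ (t +ᵥ x₀)) +ᵥ x₀ = (-ψ (t +ᵥ x₀) + t) +ᵥ x₀ := by
          rw [sub_eq_neg_add]
      _ = -ψ (t +ᵥ x₀) +ᵥ (t +ᵥ x₀) := add_vadd _ _ _
      _ = -ψ (t +ᵥ x₀) +ᵥ (ψ (t +ᵥ x₀) +ᵥ y) := by rw [h]
      _ = (-ψ (t +ᵥ x₀) + ψ (t +ᵥ x₀)) +ᵥ y := (add_vadd _ _ _).symm
      _ = y := by rw [neg_add_cancel, zero_vadd]
  have hFinv : ∀ (s : ↥S), ∀ m ∈ U, ((s : EuclideanSpace ℝ (Fin n)) + ψ m) +ᵥ x₀ = m := by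
    intro s m hm
    have hs : (s : EuclideanSpace ℝ (Fin n)) +ᵥ x₀ = y := s.2
    calc ((s : EuclideanSpace ℝ (Fin n)) + ψ m) +ᵥ x₀
        = (ψ m + (s : EuclideanSpace ℝ (Fin n))) +ᵥ x₀ := by rw [add_comm]
      _ = ψ m +ᵥ ((s : EuclideanSpace ℝ (Fin n)) +ᵥ x₀) := add_vadd _ _ _
      _ = ψ m +ᵥ y := by rw [hs]
      _ = m := (hψU _ hm).2
  set sheet : EuclideanSpace ℝ (Fin n) → ↥S := fun t =>
    if h : t - ψ (t +ᵥ x₀) ∈ S then ⟨t - ψ (t +ᵥ x₀), h⟩ else ⟨t₀, ht₀S⟩ with hsheetdef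
  have hsheet_eq : ∀ t : EuclideanSpace ℝ (Fin n), (h : t - ψ (t +ᵥ x₀) ∈ S) →
      sheet t = ⟨t - ψ (t +ᵥ x₀), h⟩ := by
    intro t h
    rw [hsheetdef]
    simp only [dif_pos h]
  refine IsEvenlyCovered.of_trivialization (t := ⟨⟨⟨⟨fun t => (t +ᵥ x₀, sheet t),
      fun p => (p.2 : EuclideanSpace ℝ (Fin n)) + ψ p.1,
      (fun t : EuclideanSpace ℝ (Fin n) => t +ᵥ x₀) ⁻¹' U,
      U ×ˢ Set.univ, ?_, ?_, ?_, ?_⟩, ?_, ?_⟩, ?_, ?_⟩, U, hUopen, rfl, rfl,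
      fun p _ => rfl⟩) hyU
  rotate_left 4; rotate_left 2
  pick_goal 6; pick_goal 6; pick_goal 6; pick_goal 6
  · -- map_source
    intro t ht
    exact ⟨ht, trivial⟩
  · -- map_target
    rintro ⟨m, s⟩ ⟨hm, -⟩
    show ((s : EuclideanSpace ℝ (Fin n)) + ψ m) +ᵥ x₀ ∈ U
    rw [hFinv s m hm]
    exact hm
  · -- left_inv
    intro t ht
    show ((sheet t : EuclideanSpace ℝ (Fin n)) + ψ (t +ᵥ x₀)) = t
    rw [hsheet_eq t (hmemS t ht)]
    exact sub_add_cancel _ _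
  · -- right_inv
    rintro ⟨m, s⟩ ⟨hm, -⟩
    have ht1 : ((s : EuclideanSpace ℝ (Fin n)) + ψ m) +ᵥ x₀ = m := hFinv s m hm
    have ht2 : (s : EuclideanSpace ℝ (Fin n)) + ψ m -
        ψ (((s : EuclideanSpace ℝ (Fin n)) + ψ m) +ᵥ x₀) = (s : EuclideanSpace ℝ (Fin n)) := by
      rw [ht1]; exact add_sub_cancel_right _ _
    have hcond : (s : EuclideanSpace ℝ (Fin n)) + ψ m -
        ψ (((s : EuclideanSpace ℝ (Fin n)) + ψ m) +ᵥ x₀) ∈ S := by rw [ht2]; exact s.2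
    show (((s : EuclideanSpace ℝ (Fin n)) + ψ m) +ᵥ x₀,
        sheet ((s : EuclideanSpace ℝ (Fin n)) + ψ m)) = (m, s)
    rw [hsheet_eq _ hcond]
    exact Prod.ext ht1 (Subtype.ext ht2)
  · -- open_source
    exact hUopen.preimage hFc
  · -- open_target
    exact hUopen.prod isOpen_univ
  · -- continuousOn_toFun
    refine ContinuousOn.prodMk hFc.continuousOn ?_
    rw [continuousOn_iff_continuous_restrict]
    have hres : ((fun t : EuclideanSpace ℝ (Fin n) => t +ᵥ x₀) ⁻¹' U).restrict sheet =
        fun t : ((fun t : EuclideanSpace ℝ (Fin n) => t +ᵥ x₀) ⁻¹' U) =>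
          (⟨t.1 - ψ (t.1 +ᵥ x₀), hmemS t.1 t.2⟩ : ↥S) := by
      funext t
      exact hsheet_eq t.1 (hmemS t.1 t.2)
    rw [show ((fun t : EuclideanSpace ℝ (Fin n) => t +ᵥ x₀) ⁻¹' U).domRestrict sheet =
        ((fun t : EuclideanSpace ℝ (Fin n) => t +ᵥ x₀) ⁻¹' U).restrict sheet from rfl, hres]
    refine Continuous.subtype_mk ?_ _
    refine Continuous.sub continuous_subtype_val ?_
    have : Continuous (ψ ∘ (fun t : ((fun t : EuclideanSpace ℝ (Fin n) => t +ᵥ x₀) ⁻¹' U) =>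
        t.1 +ᵥ x₀)) := by
      refine hψcontU.comp_continuous (hFc.comp continuous_subtype_val) ?_
      intro t
      exact t.2
    exact this
  · -- continuousOn_invFun
    refine ContinuousOn.add
      (Continuous.continuousOn (continuous_subtype_val.comp continuous_snd)) ?_
    exact hψcontU.comp continuousOn_fst (fun p hp => hp.1)
end

section
/- Let M be a nonempty connected and simply connected topological space equipped with a continuous additive action of ℝⁿ on M such that for every x ∈ M there exists ε > 0 for which the orbit map t ↦ t • x, restricted to the open Euclidean ball B(0, 2ε) ⊂ ℝⁿ, is injective and is an open embedding onto an open subset of M. Then for every x₀ ∈ M the orbit map F : ℝⁿ → M, F(t) = t • x₀, is a homeomorphism. -/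
open Topology

noncomputable section LiftAux

open Set Metric Filter

/-- clamp of a real number into `[0,1]`. -/
noncomputable def cl01 (x : ℝ) : ℝ :=
  ((Set.projIcc (0:ℝ) 1 zero_le_one x : Set.Icc (0:ℝ) 1) : ℝ)

lemma cl01_mem (x : ℝ) : cl01 x ∈ Set.Icc (0:ℝ) 1 :=
  (Set.projIcc (0:ℝ) 1 zero_le_one x).2

lemma projIcc_cl01 (x : ℝ) :
    Set.projIcc (0:ℝ) 1 zero_le_one (cl01 x) = Set.projIcc (0:ℝ) 1 zero_le_one x :=
  Set.projIcc_val zero_le_one _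

lemma cl01_zero : cl01 0 = 0 := by
  simp [cl01, Set.projIcc_left]

lemma cl01_lipschitz : LipschitzWith 1 cl01 := by
  have h := (LipschitzWith.subtype_val _).comp (LipschitzWith.projIcc (a := (0:ℝ)) zero_le_one)
  rw [one_mul] at h
  exact h

variable {G M X : Type*}

/-- Uniqueness of lifts through `F` on a preconnected domain. -/
lemma lift_unique [PseudoMetricSpace G] [TopologicalSpace M] [TopologicalSpace X]
    [PreconnectedSpace X] [T2Space G]
    (F : G → M) (ε : ℝ)
    (hΓ : ∀ t s : G, F t = F s → dist t s < 2*ε → t = s)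
    (hε : 0 < ε)
    (c c' : X → G) (hc : Continuous c) (hc' : Continuous c')
    (hl : ∀ x, F (c x) = F (c' x)) {x0 : X} (h0 : c x0 = c' x0) :
    ∀ x, c x = c' x := by
  have hS : IsClopen {x | c x = c' x} := by
    constructor
    · exact isClosed_eq hc hc'
    · rw [isOpen_iff_mem_nhds]
      intro x hx
      have hcont : Continuous fun y => dist (c y) (c' y) := (hc.dist hc')
      have hU : (fun y => dist (c y) (c' y)) ⁻¹' Set.Iio (2*ε) ∈ 𝓝 x := by
        apply (hcont.continuousAt).preimage_mem_nhds
        have hd0 : dist (c x) (c' x) = 0 := by rw [hx]; exact dist_self _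
        apply Iio_mem_nhds
        rw [hd0]; positivity
      exact Filter.mem_of_superset hU fun y hy => hΓ _ _ (hl y) hy
  have := hS.eq_univ ⟨x0, h0⟩
  intro x
  have : x ∈ {x | c x = c' x} := this ▸ Set.mem_univ x
  exact this

/-- One step of the lifting construction. -/
lemma step_lift [NormedAddCommGroup G] [TopologicalSpace M] [TopologicalSpace X]
    (F : G → M) (hop : IsOpenMap F)
    (ε : ℝ) (hε : 0 < ε)
    (hΓ : ∀ t s : G, F t = F s → dist t s < 2*ε → t = s)
    (hglue : ∀ u v t : G, F t = F v → F (u - v + t) = F u)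
    (Lp : X → G) (hLp : Continuous Lp)
    (Hn : X → M) (hHn : Continuous Hn)
    (hclose : ∀ k, ∃ t, F (Lp k) ∈ F '' Metric.ball t (ε/2) ∧ Hn k ∈ F '' Metric.ball t (ε/2)) :
    ∃ L' : X → G, Continuous L' ∧ (∀ k, F (L' k) = Hn k) ∧ ∀ k, dist (L' k) (Lp k) < ε := by
  have hex : ∀ k, ∃ u, dist u (Lp k) < ε ∧ F u = Hn k := by
    intro k
    obtain ⟨t, ⟨v, hv, hFv⟩, ⟨u₀, hu₀, hFu₀⟩⟩ := hclose k
    refine ⟨u₀ - v + Lp k, ?_, ?_⟩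
    · have h1 : dist (u₀ - v + Lp k) (Lp k) = dist u₀ v := by
        rw [dist_eq_norm, add_sub_cancel_right, ← dist_eq_norm]
      rw [h1]
      calc dist u₀ v ≤ dist u₀ t + dist t v := dist_triangle _ _ _
        _ < ε/2 + ε/2 := by
            have := mem_ball.mp hu₀
            have := mem_ball.mp hv
            rw [dist_comm t v]
            linarith
        _ = ε := by ring
    · rw [hglue u₀ v (Lp k) hFv.symm]
      exact hFu₀
  choose L' hdist hFL using hex
  refine ⟨L', ?_, hFL, hdist⟩
  rw [continuous_iff_continuousAt]
  intro k₁
  rw [ContinuousAt, Metric.tendsto_nhds]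
  intro r hr
  set t₁ := Lp k₁ with ht₁
  set u₁ := L' k₁ with hu₁
  have hd : dist u₁ t₁ < ε := hdist k₁
  set ρ := min r ((ε - dist u₁ t₁)/2) with hρdef
  have hρ : 0 < ρ := lt_min hr (by linarith)
  have hN' : IsOpen (F '' Metric.ball u₁ ρ) := hop _ isOpen_ball
  have hmem : Hn k₁ ∈ F '' Metric.ball u₁ ρ := ⟨u₁, mem_ball_self hρ, hFL k₁⟩
  have ev1 : ∀ᶠ k in 𝓝 k₁, Hn k ∈ F '' Metric.ball u₁ ρ :=
    hHn.continuousAt.preimage_mem_nhds (hN'.mem_nhds hmem)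
  have ev2 : ∀ᶠ k in 𝓝 k₁, dist (Lp k) t₁ < (ε - dist u₁ t₁)/2 := by
    have := hLp.continuousAt (x := k₁)
    rw [ContinuousAt, Metric.tendsto_nhds] at this
    exact this _ (by linarith)
  filter_upwards [ev1, ev2] with k h1 h2
  obtain ⟨u, hu, hFu⟩ := h1
  have hu' : dist u u₁ < ρ := mem_ball.mp hu
  have h3 : dist u (Lp k) < ε := by
    calc dist u (Lp k) ≤ dist u u₁ + dist u₁ t₁ + dist t₁ (Lp k) := dist_triangle4 _ _ _ _
      _ < ρ + dist u₁ t₁ + (ε - dist u₁ t₁)/2 := by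
          rw [dist_comm t₁ (Lp k)]; linarith
      _ ≤ (ε - dist u₁ t₁)/2 + dist u₁ t₁ + (ε - dist u₁ t₁)/2 := by
          have := min_le_right r ((ε - dist u₁ t₁)/2); linarith
      _ = ε := by ring
  have h4 : F (L' k) = F u := (hFL k).trans hFu.symm
  have h5 : dist (L' k) u < 2*ε := by
    calc dist (L' k) u ≤ dist (L' k) (Lp k) + dist (Lp k) u := dist_triangle _ _ _
      _ < ε + ε := by rw [dist_comm (Lp k) u]; exact add_lt_add (hdist k) h3
      _ = 2*ε := by ring
  have h6 : L' k = u := hΓ _ _ h4 h5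
  rw [h6]
  exact lt_of_lt_of_le hu' (le_trans (min_le_left _ _) le_rfl)

/-- Lifting a clamped map on the square through `F`. -/
lemma square_lift [NormedAddCommGroup G] [TopologicalSpace M]
    (F : G → M) (hop : IsOpenMap F) (hsur : Function.Surjective F)
    (ε : ℝ) (hε : 0 < ε)
    (hΓ : ∀ t s : G, F t = F s → dist t s < 2*ε → t = s)
    (hglue : ∀ u v t : G, F t = F v → F (u - v + t) = F u)
    (H : ℝ × ℝ → M) (hH : Continuous H)
    (hHc : ∀ k : ℝ × ℝ, H (cl01 k.1, cl01 k.2) = H k)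
    (t₀ : G) (ht₀ : F t₀ = H 0) :
    ∃ L : ℝ × ℝ → G, Continuous L ∧ (∀ k, F (L k) = H k) ∧ L 0 = t₀ := by
  classical
  set sec := Function.surjInv hsur with hsecdef
  have hsec : ∀ m, F (sec m) = m := fun m => Function.surjInv_eq hsur m
  set Q : Set (ℝ × ℝ) := (Set.Icc (0:ℝ) 1) ×ˢ (Set.Icc (0:ℝ) 1) with hQdef
  have hQc : IsCompact Q := (isCompact_Icc.prod isCompact_Icc)
  set U : M → Set (ℝ × ℝ) := fun m => H ⁻¹' (F '' Metric.ball (sec m) (ε/2)) with hUdef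
  have hUopen : ∀ m, IsOpen (U m) := fun m => (hop _ isOpen_ball).preimage hH
  have hUcover : Q ⊆ ⋃ m, U m := by
    intro k _
    exact Set.mem_iUnion.2 ⟨H k, ⟨sec (H k), mem_ball_self (by positivity), hsec _⟩⟩
  obtain ⟨δ, hδ, hleb⟩ := lebesgue_number_lemma_of_metric hQc hUopen hUcover
  have hP : ∀ p q : ℝ × ℝ, p ∈ Q → q ∈ Q → dist p q < δ →
      ∃ t, H p ∈ F '' Metric.ball t (ε/2) ∧ H q ∈ F '' Metric.ball t (ε/2) := by
    intro p q hp hq hpq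
    obtain ⟨m, hm⟩ := hleb p hp
    exact ⟨sec m, hm (mem_ball_self hδ), hm (by rw [mem_ball, dist_comm]; exact hpq)⟩
  obtain ⟨N, hN⟩ := exists_nat_gt (1/δ)
  have hN0 : (0:ℝ) < N := lt_trans (by positivity) hN
  have hNne : (N:ℝ) ≠ 0 := ne_of_gt hN0
  have hstep : 1/(N:ℝ) < δ := by
    rw [div_lt_iff₀ hN0]
    have : 1 < (N:ℝ) * δ := by
      rw [div_lt_iff₀ hδ] at hN
      linarith [hN]
    linarith [this]
  set ψ : ℝ × ℝ → ℝ × ℝ := fun k => (cl01 k.1, cl01 k.2) with hψdef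
  have hψQ : ∀ k, ψ k ∈ Q := fun k => ⟨cl01_mem _, cl01_mem _⟩
  have hψc : Continuous ψ :=
    ((cl01_lipschitz.continuous).comp continuous_fst).prodMk
      ((cl01_lipschitz.continuous).comp continuous_snd)
  have hψ0 : ψ 0 = 0 := by
    simp [hψdef, cl01_zero, Prod.ext_iff]
  have hnormψ : ∀ k, ‖ψ k‖ ≤ 1 := by
    intro k
    rw [Prod.norm_def]
    have h1 := cl01_mem k.1
    have h2 := cl01_mem k.2
    simp only [Real.norm_eq_abs]
    refine max_le ?_ ?_
    · rw [abs_le]; exact ⟨by linarith [h1.1], h1.2⟩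
    · rw [abs_le]; exact ⟨by linarith [h2.1], h2.2⟩
  have hQsmul : ∀ (a : ℝ), 0 ≤ a → a ≤ 1 → ∀ p ∈ Q, a • p ∈ Q := by
    rintro a ha ha1 p ⟨hp1, hp2⟩
    constructor
    · exact ⟨mul_nonneg ha hp1.1, mul_le_one₀ ha1 hp1.1 hp1.2⟩
    · exact ⟨mul_nonneg ha hp2.1, mul_le_one₀ ha1 hp2.1 hp2.2⟩
  have key : ∀ j : ℕ, j ≤ N → ∃ L : ℝ × ℝ → G, Continuous L ∧
      (∀ k, F (L k) = H (((j:ℝ)/N) • ψ k)) ∧ L 0 = t₀ := by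
    intro j
    induction j with
    | zero =>
      intro _
      refine ⟨fun _ => t₀, continuous_const, fun k => ?_, rfl⟩
      rw [show ((0:ℕ):ℝ)/N = 0 by simp, zero_smul]
      exact ht₀
    | succ j ih =>
      intro hj
      obtain ⟨Lp, hLpc, hLpl, hLp0⟩ := ih (Nat.le_of_succ_le hj)
      have hjN : (j:ℝ)/N ∈ Set.Icc (0:ℝ) 1 := by
        constructor
        · positivity
        · rw [div_le_one hN0]
          exact_mod_cast Nat.le_of_succ_le hj
      have hj1N : ((j+1:ℕ):ℝ)/N ∈ Set.Icc (0:ℝ) 1 := by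
        constructor
        · positivity
        · rw [div_le_one hN0]
          exact_mod_cast hj
      have hclose : ∀ k, ∃ t, F (Lp k) ∈ F '' Metric.ball t (ε/2) ∧
          H (((((j+1:ℕ):ℝ)/N)) • ψ k) ∈ F '' Metric.ball t (ε/2) := by
        intro k
        have hdistsmul : dist (((j:ℝ)/N) • ψ k) ((((j+1:ℕ):ℝ)/N) • ψ k) < δ := by
          rw [dist_eq_norm, ← sub_smul, norm_smul, Real.norm_eq_abs]
          have h1 : (j:ℝ)/N - ((j+1:ℕ):ℝ)/N = -(1/N) := by
            push_cast
            field_simp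
            ring
          rw [h1, abs_neg, abs_of_pos (by positivity)]
          calc 1/(N:ℝ) * ‖ψ k‖ ≤ 1/N * 1 := by
                apply mul_le_mul_of_nonneg_left (hnormψ k) (by positivity)
            _ = 1/N := mul_one _
            _ < δ := hstep
        obtain ⟨t, h1, h2⟩ := hP _ _ (hQsmul _ hjN.1 hjN.2 _ (hψQ k))
          (hQsmul _ hj1N.1 hj1N.2 _ (hψQ k)) hdistsmul
        exact ⟨t, by rw [hLpl k]; exact h1, h2⟩
      obtain ⟨L', hL'c, hL'l, hL'd⟩ := step_lift F hop ε hε hΓ hglue Lp hLpc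
        (fun k => H ((((j+1:ℕ):ℝ)/N) • ψ k))
        (hH.comp (show Continuous (fun k => ((((j+1:ℕ):ℝ)/N)) • ψ k) by fun_prop))
        hclose
      refine ⟨L', hL'c, hL'l, ?_⟩
      have e1 : F (L' 0) = H 0 := by
        rw [hL'l 0, hψ0, smul_zero]
      have e2 : F (Lp 0) = H 0 := by
        rw [hLpl 0, hψ0, smul_zero]
      have : L' 0 = Lp 0 := by
        apply hΓ _ _ (e1.trans e2.symm)
        calc dist (L' 0) (Lp 0) < ε := hL'd 0
          _ < 2*ε := by linarith
      rw [this, hLp0]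
  obtain ⟨L, hLc, hLl, hL0⟩ := key N le_rfl
  refine ⟨L, hLc, fun k => ?_, hL0⟩
  rw [hLl k, div_self hNne, one_smul]
  exact hHc k

end LiftAux

/-- Let `M` be a nonempty connected and simply connected topological space
with a continuous additive action of `ℝⁿ` such that every orbit map, restricted to a
Euclidean ball `B(0, 2ε)`, is an open embedding into `M`. Then every orbit map
`F : ℝⁿ → M`, `F t = t +ᵥ x₀`, is a homeomorphism. -/
theorem stmt_4 {n : ℕ} {M : Type*} [TopologicalSpace M] [ConnectedSpace M]
    [SimplyConnectedSpace M]
    [AddAction (EuclideanSpace ℝ (Fin n)) M]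
    [ContinuousVAdd (EuclideanSpace ℝ (Fin n)) M]
    (hloc : ∀ x : M, ∃ ε > (0 : ℝ),
      IsOpenEmbedding ((Metric.ball (0 : EuclideanSpace ℝ (Fin n)) (2 * ε)).restrict
        (fun t => t +ᵥ x)))
    (x₀ : M) :
    IsHomeomorph (fun t : EuclideanSpace ℝ (Fin n) => t +ᵥ x₀) := by
  classical
  set F : EuclideanSpace ℝ (Fin n) → M := fun t => t +ᵥ x₀ with hFdef
  have hFc : Continuous F := continuous_id.vadd continuous_const
  have htr : ∀ w a : EuclideanSpace ℝ (Fin n), F (w + a) = w +ᵥ F a := fun w a =>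
    add_vadd w a x₀
  have hglue : ∀ u v t : EuclideanSpace ℝ (Fin n), F t = F v → F (u - v + t) = F u := by
    intro u v t h
    rw [htr (u - v) t, h, ← htr, sub_add_cancel]
  -- openness
  have hop : IsOpenMap F := by
    apply IsOpenMap.of_nhds_le
    intro t
    rw [Filter.le_def]
    intro s hs
    rw [Filter.mem_map] at hs
    obtain ⟨r, hr, hball⟩ := Metric.mem_nhds_iff.mp hs
    obtain ⟨ε', hε', he⟩ := hloc (F t)
    set r' := min r (2*ε') with hr'def
    have hr' : 0 < r' := lt_min hr (by linarith)
    have hr'le : r' ≤ 2*ε' := min_le_right _ _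
    have himg : F '' Metric.ball t r' =
        ((Metric.ball (0 : EuclideanSpace ℝ (Fin n)) (2*ε')).restrict (fun w => w +ᵥ F t)) ''
          (Subtype.val ⁻¹' Metric.ball (0 : EuclideanSpace ℝ (Fin n)) r') := by
      ext z
      constructor
      · rintro ⟨u, hu, rfl⟩
        have hu' : dist u t < r' := Metric.mem_ball.mp hu
        have hw2 : u - t ∈ Metric.ball (0 : EuclideanSpace ℝ (Fin n)) (2*ε') := by
          rw [Metric.mem_ball, dist_zero_right, ← dist_eq_norm]
          exact lt_of_lt_of_le hu' hr'le
        refine ⟨⟨u - t, hw2⟩, ?_, ?_⟩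
        · show u - t ∈ Metric.ball (0 : EuclideanSpace ℝ (Fin n)) r'
          rw [Metric.mem_ball, dist_zero_right, ← dist_eq_norm]
          exact hu'
        · show (u - t) +ᵥ F t = F u
          rw [← htr, sub_add_cancel]
      · rintro ⟨⟨w, hw⟩, hwr, rfl⟩
        have hwr' : w ∈ Metric.ball (0 : EuclideanSpace ℝ (Fin n)) r' := hwr
        refine ⟨w + t, ?_, htr w t⟩
        rw [Metric.mem_ball, dist_eq_norm, add_sub_cancel_right, ← dist_zero_right]
        exact Metric.mem_ball.mp hwr'
    have hopen : IsOpen (F '' Metric.ball t r') := by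
      rw [himg]
      exact he.isOpenMap _ (Metric.isOpen_ball.preimage continuous_subtype_val)
    have hmem : F t ∈ F '' Metric.ball t r' := ⟨t, Metric.mem_ball_self hr', rfl⟩
    apply Filter.mem_of_superset (hopen.mem_nhds hmem)
    rintro z ⟨u, hu, rfl⟩
    exact hball (Metric.mem_ball.mp hu |>.trans_le (min_le_left _ _) |> Metric.mem_ball.mpr)
  -- surjectivity
  have hsur : Function.Surjective F := by
    have hR : IsOpen (Set.range F) := hop.isOpen_range
    have hRc : IsOpen (Set.range F)ᶜ := by
      rw [isOpen_iff_mem_nhds]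
      intro y hy
      obtain ⟨ε', hε', he⟩ := hloc y
      have h0mem : (0 : EuclideanSpace ℝ (Fin n)) ∈ Metric.ball (0 : EuclideanSpace ℝ (Fin n)) (2*ε') :=
        Metric.mem_ball_self (by linarith)
      have hyV : y ∈ Set.range ((Metric.ball (0 : EuclideanSpace ℝ (Fin n)) (2*ε')).restrict
          (fun w => w +ᵥ y)) := ⟨⟨0, h0mem⟩, zero_vadd _ _⟩
      apply Filter.mem_of_superset (he.isOpen_range.mem_nhds hyV)
      rintro z ⟨⟨w, hw⟩, rfl⟩
      intro hz
      obtain ⟨u, hu⟩ := hz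
      apply hy
      refine ⟨-w + u, ?_⟩
      show (-w + u) +ᵥ x₀ = y
      have hu' : u +ᵥ x₀ = w +ᵥ y := hu
      rw [add_vadd, hu', ← add_vadd, neg_add_cancel, zero_vadd]
    have hclopen : IsClopen (Set.range F) := ⟨isOpen_compl_iff.mp hRc, hR⟩
    have huniv : Set.range F = Set.univ := hclopen.eq_univ ⟨x₀, 0, zero_vadd _ _⟩
    exact Set.range_eq_univ.mp huniv
  -- discreteness constant
  obtain ⟨ε, hε, he₀⟩ := hloc x₀
  have hdiff : ∀ t s : EuclideanSpace ℝ (Fin n), F t = F s → F (t - s) = F 0 := by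
    intro t s h
    calc F (t - s) = F (-s + t) := by rw [sub_eq_neg_add]
      _ = (-s) +ᵥ F t := htr _ _
      _ = (-s) +ᵥ F s := by rw [h]
      _ = F (-s + s) := (htr _ _).symm
      _ = F 0 := by rw [neg_add_cancel]
  have hΓ : ∀ t s : EuclideanSpace ℝ (Fin n), F t = F s → dist t s < 2*ε → t = s := by
    intro t s h hts
    have h1 : F (t - s) = F 0 := hdiff t s h
    have hm1 : t - s ∈ Metric.ball (0 : EuclideanSpace ℝ (Fin n)) (2*ε) := by
      rw [Metric.mem_ball, dist_zero_right, ← dist_eq_norm]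
      exact hts
    have hm0 : (0 : EuclideanSpace ℝ (Fin n)) ∈ Metric.ball (0 : EuclideanSpace ℝ (Fin n)) (2*ε) :=
      Metric.mem_ball_self (by linarith)
    have heq : ((Metric.ball (0 : EuclideanSpace ℝ (Fin n)) (2*ε)).restrict
          (fun w => w +ᵥ x₀)) ⟨t - s, hm1⟩ =
        ((Metric.ball (0 : EuclideanSpace ℝ (Fin n)) (2*ε)).restrict (fun w => w +ᵥ x₀)) ⟨0, hm0⟩ := h1
    have := he₀.isEmbedding.injective heq
    have h2 : t - s = 0 := congrArg Subtype.val this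
    exact sub_eq_zero.mp h2
  -- injectivity
  have hinj : Function.Injective F := by
    intro t s h
    by_contra hne
    set g := t - s with hgdef
    have hg0 : g ≠ 0 := sub_ne_zero.mpr hne
    have hgF : F g = F 0 := hdiff t s h
    have hgx : g +ᵥ x₀ = x₀ := by
      have h0 : F 0 = x₀ := zero_vadd _ _
      exact hgF.trans h0
    -- the loop
    let p : Path x₀ x₀ :=
      { toFun := fun s => ((s : ℝ) • g) +ᵥ x₀
        continuous_toFun := (continuous_subtype_val.smul continuous_const).vadd continuous_const
        source' := by simp
        target' := by simp [hgx] }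
    have hhom : Nonempty (Path.Homotopy p (Path.refl x₀)) :=
      SimplyConnectedSpace.paths_homotopic p (Path.refl x₀)
    obtain ⟨H0⟩ := hhom
    set Hh : ℝ × ℝ → M := fun k =>
      H0 (Set.projIcc (0:ℝ) 1 zero_le_one k.1, Set.projIcc (0:ℝ) 1 zero_le_one k.2) with hHhdef
    have hHhc : Continuous Hh :=
      H0.continuous.comp ((continuous_projIcc.comp continuous_fst).prodMk
        (continuous_projIcc.comp continuous_snd))
    have hHhcl : ∀ k : ℝ × ℝ, Hh (cl01 k.1, cl01 k.2) = Hh k := by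
      intro k
      show H0 _ = H0 _
      rw [projIcc_cl01, projIcc_cl01]
    have hproj0 : Set.projIcc (0:ℝ) 1 zero_le_one 0 = 0 := by
      rw [Set.projIcc_left]; rfl
    have hproj1 : Set.projIcc (0:ℝ) 1 zero_le_one 1 = 1 := by
      rw [Set.projIcc_right]; rfl
    have hb0 : ∀ a : ℝ, Hh (a, 0) = x₀ := by
      intro a
      show H0 (_, Set.projIcc (0:ℝ) 1 zero_le_one 0) = x₀
      rw [hproj0]
      have := ContinuousMap.HomotopyRel.eq_fst H0 (Set.projIcc (0:ℝ) 1 zero_le_one a)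
        (show (0 : unitInterval) ∈ ({0, 1} : Set unitInterval) from Or.inl rfl)
      rw [this]
      exact p.source
    have hb1 : ∀ a : ℝ, Hh (a, 1) = x₀ := by
      intro a
      show H0 (_, Set.projIcc (0:ℝ) 1 zero_le_one 1) = x₀
      rw [hproj1]
      have := ContinuousMap.HomotopyRel.eq_fst H0 (Set.projIcc (0:ℝ) 1 zero_le_one a)
        (show (1 : unitInterval) ∈ ({0, 1} : Set unitInterval) from Or.inr rfl)
      rw [this]
      exact p.target
    have h0b : ∀ b : ℝ, Hh (0, b) = (cl01 b • g) +ᵥ x₀ := by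
      intro b
      show H0 (Set.projIcc (0:ℝ) 1 zero_le_one 0, _) = _
      rw [hproj0]
      have := H0.apply_zero (Set.projIcc (0:ℝ) 1 zero_le_one b)
      rw [this]
      rfl
    have h1b : ∀ b : ℝ, Hh (1, b) = x₀ := by
      intro b
      show H0 (Set.projIcc (0:ℝ) 1 zero_le_one 1, _) = _
      rw [hproj1]
      have := H0.apply_one (Set.projIcc (0:ℝ) 1 zero_le_one b)
      rw [this]
      rfl
    have hH00 : Hh 0 = x₀ := hb0 0
    obtain ⟨L, hLc, hLl, hL0⟩ := square_lift F hop hsur ε hε hΓ hglue Hh hHhc hHhcl 0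
      (by rw [hH00]; exact zero_vadd _ _)
    have hL00 : L (0, 0) = 0 := hL0
    -- bottom edge is constant 0
    have hA1 : ∀ a : ℝ, L (a, 0) = 0 := by
      apply lift_unique F ε hΓ hε (fun a => L (a, 0)) (fun _ => 0)
        (hLc.comp (continuous_id.prodMk continuous_const)) continuous_const
      · intro a
        rw [hLl (a, 0), hb0 a]
        exact (zero_vadd _ _).symm
      · exact hL00
    have hA2 : ∀ b : ℝ, L (1, b) = 0 := by
      apply lift_unique F ε hΓ hε (fun b => L (1, b)) (fun _ => 0)
        (hLc.comp (continuous_const.prodMk continuous_id)) continuous_const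
      · intro b
        rw [hLl (1, b), h1b b]
        exact (zero_vadd _ _).symm
      · exact hA1 1
    have hA3 : ∀ a : ℝ, L (a, 1) = 0 := by
      have := lift_unique F ε hΓ hε (fun a => L (a, 1)) (fun _ => 0)
        (hLc.comp (continuous_id.prodMk continuous_const)) continuous_const
        (fun a => by rw [hLl (a, 1), hb1 a]; exact (zero_vadd _ _).symm)
        (x0 := (1:ℝ)) (hA2 1)
      exact this
    have hA4 : ∀ b : ℝ, L (0, b) = cl01 b • g := by
      apply lift_unique F ε hΓ hε (fun b => L (0, b)) (fun b => cl01 b • g)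
        (hLc.comp (continuous_const.prodMk continuous_id))
        (cl01_lipschitz.continuous.smul continuous_const)
      · intro b
        rw [hLl (0, b), h0b b]
      · rw [hL00, cl01_zero, zero_smul]
    have hcontr : (0 : EuclideanSpace ℝ (Fin n)) = g := by
      have e1 : L (0, 1) = 0 := hA3 0
      have e2 : L (0, 1) = cl01 1 • g := hA4 1
      have hcl1 : cl01 1 = 1 := by
        simp [cl01, Set.projIcc_right]
      rw [hcl1, one_smul] at e2
      rw [← e1, e2]
    exact hg0 hcontr.symm
  exact ⟨hFc, hop, hinj, hsur⟩
end

section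
/- Let n ≥ 1, C > 0, and let f_1, …, f_n : ℝⁿ → [0, ∞) be continuous. Define d_g, D_r(x₀) and S(r) as follows: d_g(x, y) is the infimum of L_g(γ) = ∫_a^b ( Σ_i γ_i′(t)²/(f_i(γ(t)) + C) )^{1/2} dt over piecewise C¹ curves γ from x to y; D_r(x₀) = { y : d_g(x₀, y) < r }; S(r) = sup { Σ_{i=1}^n f_i(y) : y ∈ D_r(x₀) }. Define the g-volume of a Borel set A ⊆ ℝⁿ by Vol_g(A) = ∫_A Π_{i=1}^n (f_i(x) + C)^{−1/2} dλ(x), where λ is Lebesgue measure. If S(r) < ∞, then Vol_g(D_r(x₀)) ≤ ω_n · rⁿ · (1 + S(r)/C)^{n/2}, where ω_n is the Lebesgue volume of the Euclidean unit ball in ℝⁿ. -/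
open scoped BigOperators
open MeasureTheory

noncomputable section

/-- A curve `γ` is piecewise `C¹` on `[a,b]` if `[a,b]` can be subdivided by finitely
many points so that `γ` is `C¹` on each closed subinterval. -/
def PiecewiseC1On {n : ℕ} (γ : ℝ → EuclideanSpace ℝ (Fin n)) (a b : ℝ) : Prop :=
  ∃ (m : ℕ) (u : Fin (m + 1) → ℝ), Monotone u ∧ u 0 = a ∧ u (Fin.last m) = b ∧
    ∀ k : Fin m, ContDiffOn ℝ 1 γ (Set.Icc (u k.castSucc) (u k.succ))

/-- The length of a curve `γ : [a,b] → ℝⁿ` in the metric `g_{ij} = δ_{ij}/(fᵢ + C)`. -/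
def Lg {n : ℕ} (f : Fin n → EuclideanSpace ℝ (Fin n) → ℝ) (C : ℝ)
    (γ : ℝ → EuclideanSpace ℝ (Fin n)) (a b : ℝ) : ℝ :=
  ∫ t in a..b, Real.sqrt (∑ i, (deriv γ t i) ^ 2 / (f i (γ t) + C))

/-- The distance associated to the metric `g_{ij} = δ_{ij}/(fᵢ + C)`: the infimum of the
`g`-lengths of piecewise `C¹` curves joining the two points. -/
def dg {n : ℕ} (f : Fin n → EuclideanSpace ℝ (Fin n) → ℝ) (C : ℝ)
    (x y : EuclideanSpace ℝ (Fin n)) : ℝ :=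
  sInf {L : ℝ | ∃ (a b : ℝ) (γ : ℝ → EuclideanSpace ℝ (Fin n)), a ≤ b ∧
    PiecewiseC1On γ a b ∧ γ a = x ∧ γ b = y ∧ L = Lg f C γ a b}

/-- The integrand of `Lg`. -/
def Fg {n : ℕ} (f : Fin n → EuclideanSpace ℝ (Fin n) → ℝ) (C : ℝ)
    (γ : ℝ → EuclideanSpace ℝ (Fin n)) (t : ℝ) : ℝ :=
  Real.sqrt (∑ i, (deriv γ t i) ^ 2 / (f i (γ t) + C))

lemma Lg_eq {n : ℕ} (f : Fin n → EuclideanSpace ℝ (Fin n) → ℝ) (C : ℝ)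
    (γ : ℝ → EuclideanSpace ℝ (Fin n)) (a b : ℝ) :
    Lg f C γ a b = ∫ t in a..b, Fg f C γ t := rfl

lemma lg_nonneg {n : ℕ} (f : Fin n → EuclideanSpace ℝ (Fin n) → ℝ) (C : ℝ)
    (γ : ℝ → EuclideanSpace ℝ (Fin n)) {a b : ℝ} (hab : a ≤ b) : 0 ≤ Lg f C γ a b :=
  intervalIntegral.integral_nonneg hab fun _ _ => Real.sqrt_nonneg _

lemma dg_bddBelow {n : ℕ} (f : Fin n → EuclideanSpace ℝ (Fin n) → ℝ) (C : ℝ)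
    (x y : EuclideanSpace ℝ (Fin n)) :
    BddBelow {L : ℝ | ∃ (a b : ℝ) (γ : ℝ → EuclideanSpace ℝ (Fin n)), a ≤ b ∧
      PiecewiseC1On γ a b ∧ γ a = x ∧ γ b = y ∧ L = Lg f C γ a b} := by
  refine ⟨0, fun L hL => ?_⟩
  obtain ⟨a, b, γ, hab, -, -, -, rfl⟩ := hL
  exact lg_nonneg f C γ hab

lemma dg_self_lt {n : ℕ} (f : Fin n → EuclideanSpace ℝ (Fin n) → ℝ) (C : ℝ)
    (x : EuclideanSpace ℝ (Fin n)) {r : ℝ} (hr : 0 < r) : dg f C x x < r := by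
  have hm : PiecewiseC1On (fun _ : ℝ => x) 0 0 :=
    ⟨0, fun _ => 0, monotone_const, rfl, rfl, fun k => k.elim0⟩
  have h0 : Lg f C (fun _ : ℝ => x) 0 0 = 0 := intervalIntegral.integral_same
  have : dg f C x x ≤ 0 :=
    csInf_le (dg_bddBelow f C x x) ⟨0, 0, fun _ => x, le_rfl, hm, rfl, rfl, h0.symm⟩
  linarith

lemma exists_piece_nat {t : ℝ} : ∀ (m : ℕ) (w : ℕ → ℝ), (∀ k, k < m → w k ≤ w (k + 1)) →
    w 0 ≤ t → t ≤ w m → 1 ≤ m → ∃ k, k < m ∧ w k ≤ t ∧ t ≤ w (k + 1) := by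
  intro m
  induction m with
  | zero => omega
  | succ m ih =>
    intro w hw h0 hm _
    rcases Nat.eq_zero_or_pos m with hm0 | hm0
    · subst hm0; exact ⟨0, by omega, h0, hm⟩
    rcases le_or_gt t (w m) with ht | ht
    · obtain ⟨k, hk, h⟩ := ih w (fun k hk => hw k (by omega)) h0 ht hm0
      exact ⟨k, by omega, h⟩
    · exact ⟨m, by omega, ht.le, hm⟩

lemma PiecewiseC1On.mono_right {n : ℕ} {γ : ℝ → EuclideanSpace ℝ (Fin n)} {a b t : ℝ}
    (h : PiecewiseC1On γ a b) (hat : a ≤ t) (htb : t ≤ b) : PiecewiseC1On γ a t := by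
  obtain ⟨m, u, hu, h0, hl, hc⟩ := h
  refine ⟨m, fun k => min (u k) t, fun i j hij => min_le_min (hu hij) le_rfl,
    ?_, ?_, ?_⟩
  · show min (u 0) t = a
    rw [h0]; exact min_eq_left hat
  · show min (u (Fin.last m)) t = t
    rw [hl]; exact min_eq_right htb
  intro k
  show ContDiffOn ℝ 1 γ (Set.Icc (min (u k.castSucc) t) (min (u k.succ) t))
  rcases le_or_gt (u k.castSucc) t with h1 | h1
  · rw [min_eq_left h1]
    exact (hc k).mono (Set.Icc_subset_Icc le_rfl (min_le_left _ _))
  · have e1 : min (u k.castSucc) t = t := min_eq_right h1.le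
    have e2 : min (u k.succ) t = t :=
      min_eq_right (h1.le.trans (hu k.castSucc_le_succ))
    rw [e1, e2, Set.Icc_self]
    have hm1 : 1 ≤ m := k.pos
    have hw : ∀ j, j < m → u ⟨min j m, by omega⟩ ≤ u ⟨min (j + 1) m, by omega⟩ := by
      intro j hj
      exact hu (by simp only [Fin.mk_le_mk]; omega)
    have hw0 : u ⟨min 0 m, by omega⟩ ≤ t := by
      have : (⟨min 0 m, by omega⟩ : Fin (m + 1)) = 0 := by ext; simp
      rw [this, h0]; exact hat
    have hwm : t ≤ u ⟨min m m, by omega⟩ := by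
      have : (⟨min m m, by omega⟩ : Fin (m + 1)) = Fin.last m := by ext; simp
      rw [this, hl]; exact htb
    obtain ⟨j, hj, hj1, hj2⟩ := exists_piece_nat m (fun j => u ⟨min j m, by omega⟩)
      hw hw0 hwm hm1
    have e3 : (⟨min j m, by omega⟩ : Fin (m + 1)) = (⟨j, hj⟩ : Fin m).castSucc := by
      ext; simp [Nat.min_eq_left hj.le]
    have e4 : (⟨min (j + 1) m, by omega⟩ : Fin (m + 1)) = (⟨j, hj⟩ : Fin m).succ := by
      ext; simp [Nat.min_eq_left hj]
    refine (hc ⟨j, hj⟩).mono ?_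
    intro x hx
    rw [Set.mem_singleton_iff] at hx
    subst hx
    rw [e3] at hj1; rw [e4] at hj2
    exact ⟨hj1, hj2⟩


lemma piece_key {n : ℕ} {f : Fin n → EuclideanSpace ℝ (Fin n) → ℝ} {C : ℝ} (hC : 0 < C)
    (hf_cont : ∀ i, Continuous (f i)) (hf_nonneg : ∀ i x, 0 ≤ f i x)
    {γ : ℝ → EuclideanSpace ℝ (Fin n)} {c d : ℝ} (hcd : c ≤ d)
    (hγ : ContDiffOn ℝ 1 γ (Set.Icc c d)) :
    IntervalIntegrable (Fg f C γ) volume c d ∧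
      ∀ M : ℝ, 0 ≤ M → (∀ t ∈ Set.Icc c d, ∀ i, f i (γ t) + C ≤ M) →
        ‖γ d - γ c‖ ≤ Real.sqrt M * ∫ t in c..d, Fg f C γ t := by
  rcases eq_or_lt_of_le hcd with rfl | hlt
  · refine ⟨IntervalIntegrable.refl, fun M hM _ => ?_⟩
    rw [intervalIntegral.integral_same, sub_self, norm_zero, mul_zero]
  set γ' := derivWithin γ (Set.Icc c d) with hγ'
  have hud : UniqueDiffOn ℝ (Set.Icc c d) := uniqueDiffOn_Icc hlt
  have hγ'c : ContinuousOn γ' (Set.Icc c d) := hγ.continuousOn_derivWithin hud le_rfl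
  have hderiv : ∀ t ∈ Set.Ioo c d, HasDerivAt γ (γ' t) t := by
    intro t ht
    have h1 : HasDerivWithinAt γ (γ' t) (Set.Icc c d) t :=
      (hγ.differentiableOn one_ne_zero t (Set.Ioo_subset_Icc_self ht)).hasDerivWithinAt
    exact h1.hasDerivAt (Icc_mem_nhds ht.1 ht.2)
  have hdeq : ∀ t ∈ Set.Ioo c d, deriv γ t = γ' t := fun t ht => (hderiv t ht).deriv
  set g : ℝ → ℝ := fun t => Real.sqrt (∑ i, (γ' t i) ^ 2 / (f i (γ t) + C)) with hg
  have hpos : ∀ (t : ℝ) (i : Fin n), (0:ℝ) < f i (γ t) + C := fun t i =>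
    add_pos_of_nonneg_of_pos (hf_nonneg i _) hC
  have hgc : ContinuousOn g (Set.Icc c d) := by
    apply Real.continuous_sqrt.comp_continuousOn
    apply continuousOn_finset_sum
    intro i _
    apply ContinuousOn.div
    · exact (((EuclideanSpace.proj i).continuous.comp_continuousOn hγ'c).pow 2)
    · exact ((hf_cont i).comp_continuousOn hγ.continuousOn).add continuousOn_const
    · exact fun t _ => (hpos t i).ne'
  have hd0 : ∀ᵐ s : ℝ ∂volume, s ≠ d := by
    rw [ae_iff]
    convert Real.volume_singleton (a := d) using 2
    ext s; simp
  have ae1 : ∀ᵐ s ∂volume, s ∈ Set.uIoc c d → Fg f C γ s = g s := by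
    filter_upwards [hd0] with s hsd hs
    rw [Set.uIoc_of_le hcd] at hs
    have hso : s ∈ Set.Ioo c d := ⟨hs.1, lt_of_le_of_ne hs.2 hsd⟩
    simp only [Fg, g, hdeq s hso]
  have hgi : IntervalIntegrable g volume c d :=
    ContinuousOn.intervalIntegrable (by rwa [Set.uIcc_of_le hcd])
  have hFi : IntervalIntegrable (Fg f C γ) volume c d := by
    rw [intervalIntegrable_iff_integrableOn_Ioc_of_le hcd] at hgi ⊢
    refine hgi.congr ?_
    filter_upwards [ae_restrict_mem measurableSet_Ioc, ae_restrict_of_ae ae1] with s h1 h2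
    exact (h2 (by rwa [Set.uIoc_of_le hcd])).symm
  have hint_eq : ∫ t in c..d, Fg f C γ t = ∫ t in c..d, g t :=
    intervalIntegral.integral_congr_ae ae1
  refine ⟨hFi, fun M hM hb => ?_⟩
  have hγ'i : IntervalIntegrable γ' volume c d :=
    ContinuousOn.intervalIntegrable (by rwa [Set.uIcc_of_le hcd])
  have hftc : ∫ t in c..d, γ' t = γ d - γ c :=
    intervalIntegral.integral_eq_sub_of_hasDeriv_right_of_le hcd hγ.continuousOn
      (fun t ht => (hderiv t ht).hasDerivWithinAt) hγ'i
  have h1 : ‖γ d - γ c‖ ≤ ∫ t in c..d, ‖γ' t‖ := by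
    rw [← hftc]
    exact intervalIntegral.norm_integral_le_integral_norm hcd
  have hnorm : ∀ t ∈ Set.Icc c d, ‖γ' t‖ ≤ Real.sqrt M * g t := by
    intro t ht
    rw [EuclideanSpace.norm_eq, ← Real.sqrt_mul hM]
    apply Real.sqrt_le_sqrt
    rw [Finset.mul_sum]
    apply Finset.sum_le_sum
    intro i _
    have hp := hpos t i
    have he : ‖γ' t i‖ ^ 2 = (γ' t i) ^ 2 := by rw [Real.norm_eq_abs, sq_abs]
    rw [he]
    calc (γ' t i) ^ 2 = (γ' t i) ^ 2 / (f i (γ t) + C) * (f i (γ t) + C) :=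
          (div_mul_cancel₀ _ hp.ne').symm
      _ ≤ (γ' t i) ^ 2 / (f i (γ t) + C) * M :=
          mul_le_mul_of_nonneg_left (hb t ht i) (by positivity)
      _ = M * ((γ' t i) ^ 2 / (f i (γ t) + C)) := mul_comm _ _
  have h2 : ∫ t in c..d, ‖γ' t‖ ≤ ∫ t in c..d, Real.sqrt M * g t :=
    intervalIntegral.integral_mono_on hcd
      (ContinuousOn.intervalIntegrable (by rw [Set.uIcc_of_le hcd]; exact hγ'c.norm))
      (hgi.const_mul _) hnorm
  rw [intervalIntegral.integral_const_mul] at h2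
  rw [hint_eq]
  exact h1.trans h2


lemma lg_pieces {n : ℕ} {f : Fin n → EuclideanSpace ℝ (Fin n) → ℝ} {C : ℝ} (hC : 0 < C)
    (hf_cont : ∀ i, Continuous (f i)) (hf_nonneg : ∀ i x, 0 ≤ f i x)
    {γ : ℝ → EuclideanSpace ℝ (Fin n)} {a b : ℝ} (hab : a ≤ b)
    (hpc : PiecewiseC1On γ a b) :
    IntervalIntegrable (Fg f C γ) volume a b ∧
      ∀ M : ℝ, 0 ≤ M → (∀ t ∈ Set.Icc a b, ∀ i, f i (γ t) + C ≤ M) →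
        ‖γ b - γ a‖ ≤ Real.sqrt M * Lg f C γ a b := by
  obtain ⟨m, u, hu, h0, hl, hc⟩ := hpc
  set v : ℕ → ℝ := fun k => u ⟨min k m, by omega⟩ with hv
  have hv0 : v 0 = a := by
    have : (⟨min 0 m, by omega⟩ : Fin (m + 1)) = 0 := by ext; simp
    simp only [hv]; rw [this, h0]
  have hvm : v m = b := by
    have : (⟨min m m, by omega⟩ : Fin (m + 1)) = Fin.last m := by ext; simp
    simp only [hv]; rw [this, hl]
  have hmono : ∀ i j, i ≤ j → v i ≤ v j := by
    intro i j hij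
    exact hu (by simp only [Fin.mk_le_mk]; omega)
  have hcdk : ∀ k, k < m → ContDiffOn ℝ 1 γ (Set.Icc (v k) (v (k + 1))) := by
    intro k hk
    have e3 : (⟨min k m, by omega⟩ : Fin (m + 1)) = (⟨k, hk⟩ : Fin m).castSucc := by
      ext; simp [Nat.min_eq_left hk.le]
    have e4 : (⟨min (k + 1) m, by omega⟩ : Fin (m + 1)) = (⟨k, hk⟩ : Fin m).succ := by
      ext; simp [Nat.min_eq_left hk]
    simp only [hv]; rw [e3, e4]
    exact hc ⟨k, hk⟩
  have hsubk : ∀ k, k < m → Set.Icc (v k) (v (k + 1)) ⊆ Set.Icc a b := by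
    intro k hk
    rw [← hv0, ← hvm]
    exact Set.Icc_subset_Icc (hmono 0 k (by omega)) (hmono (k + 1) m (by omega))
  have hkey : ∀ k, k < m →
      (IntervalIntegrable (Fg f C γ) volume (v k) (v (k + 1)) ∧
        ∀ M : ℝ, 0 ≤ M → (∀ t ∈ Set.Icc (v k) (v (k + 1)), ∀ i, f i (γ t) + C ≤ M) →
          ‖γ (v (k + 1)) - γ (v k)‖ ≤ Real.sqrt M * ∫ t in v k..v (k + 1), Fg f C γ t) :=
    fun k hk => piece_key hC hf_cont hf_nonneg (hmono k (k + 1) (by omega)) (hcdk k hk)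
  have hInt : IntervalIntegrable (Fg f C γ) volume a b := by
    have := IntervalIntegrable.trans_iterate (a := v) (n := m)
      (fun k hk => (hkey k hk).1)
    rwa [hv0, hvm] at this
  refine ⟨hInt, fun M hM hb => ?_⟩
  have hsum : ∑ k ∈ Finset.range m, ∫ t in v k..v (k + 1), Fg f C γ t
      = ∫ t in a..b, Fg f C γ t := by
    have := intervalIntegral.sum_integral_adjacent_intervals (a := v) (n := m)
      (fun k hk => (hkey k hk).1)
    rwa [hv0, hvm] at this
  have htel : γ b - γ a = ∑ k ∈ Finset.range m, (γ (v (k + 1)) - γ (v k)) := by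
    rw [Finset.sum_range_sub (f := fun k => γ (v k)), hv0, hvm]
  calc ‖γ b - γ a‖ ≤ ∑ k ∈ Finset.range m, ‖γ (v (k + 1)) - γ (v k)‖ := by
        rw [htel]; exact norm_sum_le _ _
    _ ≤ ∑ k ∈ Finset.range m, Real.sqrt M * ∫ t in v k..v (k + 1), Fg f C γ t := by
        apply Finset.sum_le_sum
        intro k hk
        rw [Finset.mem_range] at hk
        exact (hkey k hk).2 M hM fun t ht i => hb t (hsubk k hk ht) i
    _ = Real.sqrt M * Lg f C γ a b := by
        rw [← Finset.mul_sum, hsum, Lg_eq]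


lemma curve_estimate {n : ℕ} {f : Fin n → EuclideanSpace ℝ (Fin n) → ℝ} {C : ℝ} (hC : 0 < C)
    (hf_cont : ∀ i, Continuous (f i)) (hf_nonneg : ∀ i x, 0 ≤ f i x)
    {x₀ y : EuclideanSpace ℝ (Fin n)} {r S : ℝ} (hS0 : 0 ≤ S)
    (hS : ∀ z, dg f C x₀ z < r → ∑ i, f i z ≤ S)
    (hy : dg f C x₀ y < r) : ‖y - x₀‖ ≤ Real.sqrt (S + C) * r := by
  -- the set of lengths is nonempty (straight segment) and bounded below
  set Γ := {L : ℝ | ∃ (a b : ℝ) (γ : ℝ → EuclideanSpace ℝ (Fin n)), a ≤ b ∧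
    PiecewiseC1On γ a b ∧ γ a = x₀ ∧ γ b = y ∧ L = Lg f C γ a b} with hΓ
  have hne : Γ.Nonempty := by
    refine ⟨Lg f C (fun t : ℝ => x₀ + t • (y - x₀)) 0 1,
      0, 1, fun t : ℝ => x₀ + t • (y - x₀), zero_le_one, ?_, by simp, by simp, rfl⟩
    refine ⟨1, fun k => (k : ℕ), fun i j hij => by exact_mod_cast Nat.cast_le.2 hij, by simp,
      by simp, fun k => ?_⟩
    exact (contDiff_const.add (contDiff_id.smul contDiff_const)).contDiffOn
  obtain ⟨L, hLmem, hLr⟩ := (csInf_lt_iff (dg_bddBelow f C x₀ y) hne).1 hy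
  obtain ⟨a, b, γ, hab, hpc, hγa, hγb, rfl⟩ := hLmem
  obtain ⟨hInt, hbound⟩ := lg_pieces hC hf_cont hf_nonneg hab hpc
  have hclaim : ∀ t ∈ Set.Icc a b, dg f C x₀ (γ t) < r := by
    intro t ht
    have h1 : PiecewiseC1On γ a t := PiecewiseC1On.mono_right hpc ht.1 ht.2
    have h2 : dg f C x₀ (γ t) ≤ Lg f C γ a t :=
      csInf_le (dg_bddBelow f C x₀ (γ t)) ⟨a, t, γ, ht.1, h1, hγa, rfl, rfl⟩
    have h3 : Lg f C γ a t ≤ Lg f C γ a b := by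
      rw [Lg_eq, Lg_eq]
      exact intervalIntegral.integral_mono_interval le_rfl ht.1 ht.2
        (Filter.Eventually.of_forall fun s => Real.sqrt_nonneg _) hInt
    linarith
  have hM : ∀ t ∈ Set.Icc a b, ∀ i, f i (γ t) + C ≤ S + C := by
    intro t ht i
    have h4 := hS (γ t) (hclaim t ht)
    have h5 : f i (γ t) ≤ ∑ j, f j (γ t) :=
      Finset.single_le_sum (fun j _ => hf_nonneg j _) (Finset.mem_univ i)
    linarith
  have hfin := hbound (S + C) (by linarith) hM
  rw [hγa, hγb] at hfin
  calc ‖y - x₀‖ ≤ Real.sqrt (S + C) * Lg f C γ a b := hfin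
    _ ≤ Real.sqrt (S + C) * r := mul_le_mul_of_nonneg_left hLr.le (Real.sqrt_nonneg _)


/-- The `g`-volume of a Borel set `A ⊆ ℝⁿ`: `∫_A ∏ᵢ (fᵢ + C)^{-1/2} dλ`. -/
def Volg {n : ℕ} (f : Fin n → EuclideanSpace ℝ (Fin n) → ℝ) (C : ℝ)
    (A : Set (EuclideanSpace ℝ (Fin n))) : ℝ :=
  ∫ x in A, ∏ i, (f i x + C) ^ (-(1 : ℝ) / 2)

/-- the volume estimate in the proof of Theorem 1. For `C > 0` and
continuous `f_i : ℝⁿ → [0,∞)`, if `S(r) = sup { ∑ᵢ fᵢ(y) : y ∈ D_r(x₀) }` is finite,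
then `Vol_g(D_r(x₀)) ≤ ω_n rⁿ (1 + S(r)/C)^{n/2}`, where `ω_n` is the Lebesgue volume
of the Euclidean unit ball in `ℝⁿ`. -/
theorem stmt_8 {n : ℕ} (hn : 1 ≤ n) {C : ℝ} (hC : 0 < C)
    (f : Fin n → EuclideanSpace ℝ (Fin n) → ℝ)
    (hf_cont : ∀ i, Continuous (f i)) (hf_nonneg : ∀ i x, 0 ≤ f i x)
    (x₀ : EuclideanSpace ℝ (Fin n)) (r : ℝ) (hr : 0 < r)
    (hbdd : BddAbove ((fun y => ∑ i, f i y) '' {y | dg f C x₀ y < r})) :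
    Volg f C {y | dg f C x₀ y < r} ≤
      (volume (Metric.ball (0 : EuclideanSpace ℝ (Fin n)) 1)).toReal * r ^ n *
        (1 + sSup ((fun y => ∑ i, f i y) '' {y | dg f C x₀ y < r}) / C) ^ ((n : ℝ) / 2) := by
  set D := {y | dg f C x₀ y < r} with hD
  set S := sSup ((fun y => ∑ i, f i y) '' D) with hSdef
  set ω := (volume (Metric.ball (0 : EuclideanSpace ℝ (Fin n)) 1)).toReal with hω
  have hx₀ : x₀ ∈ D := dg_self_lt f C x₀ hr
  have hS0 : 0 ≤ S :=
    le_trans (Finset.sum_nonneg fun i _ => hf_nonneg i x₀) (le_csSup hbdd ⟨x₀, hx₀, rfl⟩)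
  have hsub : D ⊆ Metric.closedBall x₀ (r * Real.sqrt (S + C)) := by
    intro y hy
    have h := curve_estimate hC hf_cont hf_nonneg hS0
      (fun z hz => le_csSup hbdd ⟨z, hz, rfl⟩) hy
    rw [Metric.mem_closedBall, dist_eq_norm, mul_comm]
    exact h
  set R := r * Real.sqrt (S + C) with hR
  have hR0 : 0 ≤ R := mul_nonneg hr.le (Real.sqrt_nonneg _)
  have hballfin : volume (Metric.closedBall x₀ R) < ⊤ :=
    (isCompact_closedBall x₀ R).measure_lt_top
  have hDfin : volume D < ⊤ := lt_of_le_of_lt (measure_mono hsub) hballfin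
  have hcont : Continuous fun x => ∏ i, (f i x + C) ^ (-(1:ℝ)/2) := by
    apply continuous_finset_prod
    intro i _
    apply Continuous.rpow_const ((hf_cont i).add continuous_const)
    intro x
    exact Or.inl (by show f i x + C ≠ 0; nlinarith [hf_nonneg i x])
  have hgb : ∀ x ∈ D, ‖∏ i, (f i x + C) ^ (-(1:ℝ)/2)‖ ≤ (C ^ (-(1:ℝ)/2)) ^ n := by
    intro x _
    have hnn : ∀ i : Fin n, (0:ℝ) ≤ (f i x + C) ^ (-(1:ℝ)/2) := fun i =>
      Real.rpow_nonneg (by nlinarith [hf_nonneg i x]) _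
    rw [Real.norm_eq_abs, abs_of_nonneg (Finset.prod_nonneg fun i _ => hnn i)]
    calc ∏ i, (f i x + C) ^ (-(1:ℝ)/2) ≤ ∏ _i : Fin n, C ^ (-(1:ℝ)/2) :=
        Finset.prod_le_prod (fun i _ => hnn i) (fun i _ =>
          Real.rpow_le_rpow_of_nonpos hC (by linarith [hf_nonneg i x]) (by norm_num))
      _ = (C ^ (-(1:ℝ)/2)) ^ n := by simp [Finset.prod_const, Finset.card_univ]
  have hvol1 : Volg f C D ≤ (C ^ (-(1:ℝ)/2)) ^ n * (volume D).toReal := by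
    refine le_trans (le_abs_self _) ?_
    rw [← Real.norm_eq_abs]
    exact norm_setIntegral_le_of_norm_le_const hDfin hgb
  have htR : (volume D).toReal ≤ (volume (Metric.closedBall x₀ R)).toReal :=
    ENNReal.toReal_mono hballfin.ne (measure_mono hsub)
  have hballeq : (volume (Metric.closedBall x₀ R)).toReal = R ^ n * ω := by
    rw [hω, Measure.addHaar_closedBall volume x₀ hR0, finrank_euclideanSpace_fin,
      ENNReal.toReal_mul, ENNReal.toReal_ofReal (by positivity)]
  have hC2 : (0:ℝ) ≤ (C ^ (-(1:ℝ)/2)) ^ n := by positivity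
  have hω0 : 0 ≤ ω := ENNReal.toReal_nonneg
  have harith : (C ^ (-(1:ℝ)/2)) ^ n * (R ^ n * ω) = ω * r ^ n * (1 + S / C) ^ ((n:ℝ)/2) := by
    have hSC : (0:ℝ) ≤ S + C := by linarith
    have e1 : C ^ (-(1:ℝ)/2) * Real.sqrt (S + C) = ((S + C)/C) ^ ((1:ℝ)/2) := by
      rw [Real.sqrt_eq_rpow, Real.div_rpow hSC hC.le,
        show (-(1:ℝ)/2) = -(1/2) by norm_num, Real.rpow_neg hC.le]
      ring
    have e2 : (1 : ℝ) + S / C = (S + C)/C := by field_simp; ring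
    have e3 : (((S + C)/C) ^ ((1:ℝ)/2)) ^ n = ((S + C)/C) ^ ((n:ℝ)/2) := by
      rw [← Real.rpow_natCast (((S + C)/C) ^ ((1:ℝ)/2)) n, ← Real.rpow_mul (by positivity)]
      congr 1; ring
    calc (C ^ (-(1:ℝ)/2)) ^ n * (R ^ n * ω)
        = ω * r ^ n * (C ^ (-(1:ℝ)/2) * Real.sqrt (S + C)) ^ n := by rw [hR]; ring
      _ = ω * r ^ n * (1 + S / C) ^ ((n:ℝ)/2) := by rw [e1, e3, ← e2]
  calc Volg f C D ≤ (C ^ (-(1:ℝ)/2)) ^ n * (volume D).toReal := hvol1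
    _ ≤ (C ^ (-(1:ℝ)/2)) ^ n * (R ^ n * ω) := by
        apply mul_le_mul_of_nonneg_left _ hC2
        rw [← hballeq]
        exact htR
    _ = ω * r ^ n * (1 + S / C) ^ ((n:ℝ)/2) := harith
end
end

section
/- Let n ≥ 2, C > 0, and let f_1, …, f_n : ℝⁿ → [0, ∞) be continuous. Define d_g(x, y) as the infimum of L_g(γ) = ∫_a^b ( Σ_i γ_i′(t)²/(f_i(γ(t)) + C) )^{1/2} dt over piecewise C¹ curves γ from x to y, let D_r(x₀) = { y : d_g(x₀, y) < r }, S(r) = sup { Σ_{i=1}^n f_i(y) : y ∈ D_r(x₀) }, and Vol_g(A) = ∫_A Π_{i=1}^n (f_i + C)^{−1/2} dλ with λ Lebesgue measure. Fix x₀ ∈ ℝⁿ and suppose there exist a, b > 0 such that Vol_g(D_r(x₀)) ≥ a · e^{b r} for all r > 0. Then there exist constants k > 0, ℓ > 0 and r₀ > 0 such that S(r) ≥ k · e^{ℓ r} for all r > r₀ (where S(r) = ∞ is allowed and the inequality then holds trivially). -/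
open scoped BigOperators ENNReal
open MeasureTheory Set Filter

noncomputable section

/-- `S(r)`: the supremum (in `ℝ≥0∞`, so that the value `∞` is allowed) of
`∑ᵢ fᵢ(y)` over the open `g`-ball of radius `r` centered at `x₀`. -/
def Sg {n : ℕ} (f : Fin n → EuclideanSpace ℝ (Fin n) → ℝ) (C : ℝ)
    (x₀ : EuclideanSpace ℝ (Fin n)) (r : ℝ) : ℝ≥0∞ :=
  ⨆ y ∈ {y | dg f C x₀ y < r}, ENNReal.ofReal (∑ i, f i y)

section AuxLemmas

variable {n : ℕ}

lemma aux_deriv_eq_derivWithin {γ : ℝ → EuclideanSpace ℝ (Fin n)} {u v : ℝ}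
    (hγ : ContDiffOn ℝ 1 γ (Set.Icc u v)) {t : ℝ} (ht : t ∈ Set.Ioo u v) :
    DifferentiableAt ℝ γ t ∧ derivWithin γ (Set.Icc u v) t = deriv γ t := by
  have hmem : Set.Icc u v ∈ nhds t := Icc_mem_nhds ht.1 ht.2
  have hd : DifferentiableWithinAt ℝ γ (Set.Icc u v) t :=
    (hγ.differentiableOn one_ne_zero) t (Set.Ioo_subset_Icc_self ht)
  exact ⟨hd.differentiableAt hmem, derivWithin_of_mem_nhds hmem⟩

lemma aux_piece_intervalIntegrable {F : Type*} [NormedAddCommGroup F]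
    {γ : ℝ → EuclideanSpace ℝ (Fin n)} {u v : ℝ} (huv : u ≤ v)
    (hγ : ContDiffOn ℝ 1 γ (Set.Icc u v))
    {Φ : EuclideanSpace ℝ (Fin n) → EuclideanSpace ℝ (Fin n) → F}
    (hΦ : Continuous fun p : EuclideanSpace ℝ (Fin n) × EuclideanSpace ℝ (Fin n) => Φ p.1 p.2) :
    IntervalIntegrable (fun t => Φ (γ t) (deriv γ t)) volume u v := by
  rcases eq_or_lt_of_le huv with rfl | hlt
  · rw [intervalIntegrable_iff]
    simp
  · set φ := derivWithin γ (Set.Icc u v) with hφdef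
    have hφ : ContinuousOn φ (Set.Icc u v) :=
      hγ.continuousOn_derivWithin (uniqueDiffOn_Icc hlt) le_rfl
    have hγc : ContinuousOn γ (Set.Icc u v) := hγ.continuousOn
    have hJ : ContinuousOn (fun t => Φ (γ t) (φ t)) (Set.Icc u v) :=
      by have := hΦ.comp_continuousOn (ContinuousOn.prodMk hγc hφ); exact this
    have hJint : IntegrableOn (fun t => Φ (γ t) (φ t)) (Set.Ioc u v) :=
      (hJ.integrableOn_Icc).mono_set Set.Ioc_subset_Icc_self
    have hne : ∀ᵐ t : ℝ ∂volume, t ≠ v := by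
      rw [ae_iff]
      have : {x : ℝ | ¬x ≠ v} = {v} := by ext x; simp
      rw [this]
      exact measure_singleton v
    have hae : (fun t => Φ (γ t) (φ t)) =ᵐ[volume.restrict (Set.Ioc u v)]
        fun t => Φ (γ t) (deriv γ t) := by
      filter_upwards [ae_restrict_of_ae hne, ae_restrict_mem measurableSet_Ioc] with t h1 h2
      have ht : t ∈ Set.Ioo u v := ⟨h2.1, lt_of_le_of_ne h2.2 h1⟩
      rw [hφdef, (aux_deriv_eq_derivWithin hγ ht).2]
    rw [intervalIntegrable_iff_integrableOn_Ioc_of_le huv]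
    exact hJint.congr_fun_ae hae

lemma aux_restrict {γ : ℝ → EuclideanSpace ℝ (Fin n)} {a b t : ℝ} (h : PiecewiseC1On γ a b)
    (hat : a ≤ t) (htb : t ≤ b) : PiecewiseC1On γ a t := by
  obtain ⟨m, u, hmono, h0, hlast, hC1⟩ := h
  refine ⟨m, fun k => min (u k) t, fun i j hij => min_le_min (hmono hij) le_rfl, ?_, ?_, ?_⟩
  · show min (u 0) t = a
    rw [h0]; exact min_eq_left hat
  · show min (u (Fin.last m)) t = t
    rw [hlast]; exact min_eq_right htb
  · intro k
    show ContDiffOn ℝ 1 γ (Set.Icc (min (u k.castSucc) t) (min (u k.succ) t))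
    rcases le_total t (u k.castSucc) with hk | hk
    · have h1 : min (u k.castSucc) t = t := min_eq_right hk
      have h2 : min (u k.succ) t = t := min_eq_right (hk.trans (hmono k.castSucc_le_succ))
      rw [h1, h2, Set.Icc_self]
      intro x hx
      rw [Set.mem_singleton_iff] at hx; subst hx
      exact contDiffWithinAt_singleton
    · have h1 : min (u k.castSucc) t = u k.castSucc := min_eq_left hk
      rw [h1]
      exact (hC1 k).mono (Set.Icc_subset_Icc le_rfl (min_le_left _ _))

lemma aux_full_intervalIntegrable {F : Type*} [NormedAddCommGroup F]
    {γ : ℝ → EuclideanSpace ℝ (Fin n)} {a b : ℝ} (h : PiecewiseC1On γ a b)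
    {Φ : EuclideanSpace ℝ (Fin n) → EuclideanSpace ℝ (Fin n) → F}
    (hΦ : Continuous fun p : EuclideanSpace ℝ (Fin n) × EuclideanSpace ℝ (Fin n) => Φ p.1 p.2) :
    IntervalIntegrable (fun t => Φ (γ t) (deriv γ t)) volume a b := by
  obtain ⟨m, u, hmono, h0, hlast, hC1⟩ := h
  have key : ∀ j : Fin (m + 1),
      IntervalIntegrable (fun t => Φ (γ t) (deriv γ t)) volume (u 0) (u j) := by
    intro j
    induction j using Fin.induction with
    | zero =>
        rw [intervalIntegrable_iff]
        simp
    | succ k ih =>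
        exact ih.trans (aux_piece_intervalIntegrable (hmono k.castSucc_le_succ) (hC1 k) hΦ)
  have := key (Fin.last m)
  rwa [h0, hlast] at this

lemma aux_piece_displacement {γ : ℝ → EuclideanSpace ℝ (Fin n)} {u v : ℝ} (huv : u ≤ v)
    (hγ : ContDiffOn ℝ 1 γ (Set.Icc u v)) :
    ‖γ v - γ u‖ ≤ ∫ t in u..v, ‖deriv γ t‖ := by
  rcases eq_or_lt_of_le huv with rfl | hlt
  · simp
  · have hint : IntervalIntegrable (deriv γ) volume u v :=
      aux_piece_intervalIntegrable huv hγ (Φ := fun _ w => w) continuous_snd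
    have heq : (∫ t in u..v, deriv γ t) = γ v - γ u := by
      refine intervalIntegral.integral_eq_sub_of_hasDeriv_right_of_le huv hγ.continuousOn
        (fun t ht => ?_) hint
      exact ((aux_deriv_eq_derivWithin hγ ht).1.hasDerivAt).hasDerivWithinAt
    calc ‖γ v - γ u‖ = ‖∫ t in u..v, deriv γ t‖ := by rw [heq]
      _ ≤ ∫ t in u..v, ‖deriv γ t‖ := intervalIntegral.norm_integral_le_integral_norm huv

lemma aux_speed_bound {C : ℝ} (hC : 0 < C) (f : Fin n → EuclideanSpace ℝ (Fin n) → ℝ)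
    (hf_nonneg : ∀ i x, 0 ≤ f i x) {M : ℝ} (hM : 0 ≤ M) {x : EuclideanSpace ℝ (Fin n)}
    (hx : ∑ i, f i x ≤ M) (w : EuclideanSpace ℝ (Fin n)) :
    ‖w‖ ≤ Real.sqrt (M + C) * Real.sqrt (∑ i, (w i) ^ 2 / (f i x + C)) := by
  have hMC : (0 : ℝ) < M + C := by linarith
  have hfi : ∀ i, f i x + C ≤ M + C := by
    intro i
    have : f i x ≤ ∑ j, f j x :=
      Finset.single_le_sum (fun j _ => hf_nonneg j x) (Finset.mem_univ i)
    linarith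
  have h2 : (∑ i, (w i) ^ 2) / (M + C) ≤ ∑ i, (w i) ^ 2 / (f i x + C) := by
    rw [Finset.sum_div]
    refine Finset.sum_le_sum fun i _ => ?_
    have hpos : 0 < f i x + C := by have := hf_nonneg i x; linarith
    exact div_le_div_of_nonneg_left (sq_nonneg _) hpos (hfi i)
  have h3 := Real.sqrt_le_sqrt h2
  rw [Real.sqrt_div (by positivity)] at h3
  have h4 : ‖w‖ = Real.sqrt (∑ i, (w i) ^ 2) := by
    rw [EuclideanSpace.norm_eq]
    congr 1
    refine Finset.sum_congr rfl fun i _ => ?_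
    rw [Real.norm_eq_abs, sq_abs]
  rw [← h4] at h3
  have hs : 0 < Real.sqrt (M + C) := Real.sqrt_pos.2 hMC
  rw [div_le_iff₀ hs] at h3
  linarith [h3]

lemma aux_dgSet_nonempty (f : Fin n → EuclideanSpace ℝ (Fin n) → ℝ) (C : ℝ)
    (x y : EuclideanSpace ℝ (Fin n)) :
    {L : ℝ | ∃ (a b : ℝ) (γ : ℝ → EuclideanSpace ℝ (Fin n)), a ≤ b ∧
      PiecewiseC1On γ a b ∧ γ a = x ∧ γ b = y ∧ L = Lg f C γ a b}.Nonempty := by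
  set γ : ℝ → EuclideanSpace ℝ (Fin n) := fun t => x + t • (y - x) with hγdef
  have hsmooth : ContDiff ℝ 1 γ := contDiff_const.add (contDiff_id.smul contDiff_const)
  refine ⟨Lg f C γ 0 1, 0, 1, γ, zero_le_one, ?_, ?_, ?_, rfl⟩
  · refine ⟨1, fun k => (k : ℕ), fun i j hij => Nat.cast_le.2 hij, by simp, by simp, ?_⟩
    intro k
    exact hsmooth.contDiffOn
  · simp [hγdef]
  · simp [hγdef]

lemma aux_dgSet_bddBelow (f : Fin n → EuclideanSpace ℝ (Fin n) → ℝ) (C : ℝ)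
    (x y : EuclideanSpace ℝ (Fin n)) :
    BddBelow {L : ℝ | ∃ (a b : ℝ) (γ : ℝ → EuclideanSpace ℝ (Fin n)), a ≤ b ∧
      PiecewiseC1On γ a b ∧ γ a = x ∧ γ b = y ∧ L = Lg f C γ a b} := by
  refine ⟨0, fun L hL => ?_⟩
  obtain ⟨a, b, γ, hab, _, _, _, rfl⟩ := hL
  exact intervalIntegral.integral_nonneg hab fun t _ => Real.sqrt_nonneg _

lemma aux_Phi_continuous {C : ℝ} (hC : 0 < C) {f : Fin n → EuclideanSpace ℝ (Fin n) → ℝ}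
    (hf_cont : ∀ i, Continuous (f i)) (hf_nonneg : ∀ i x, 0 ≤ f i x) :
    Continuous fun p : EuclideanSpace ℝ (Fin n) × EuclideanSpace ℝ (Fin n) =>
      Real.sqrt (∑ i, (p.2 i) ^ 2 / (f i p.1 + C)) := by
  refine Real.continuous_sqrt.comp (continuous_finset_sum _ fun i _ => ?_)
  refine Continuous.div ?_ (((hf_cont i).comp continuous_fst).add continuous_const) ?_
  · exact (((EuclideanSpace.proj i).continuous.comp continuous_snd)).pow 2
  · intro p
    have := hf_nonneg i p.1
    positivity

lemma aux_dist_le {C : ℝ} (hC : 0 < C) {f : Fin n → EuclideanSpace ℝ (Fin n) → ℝ}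
    (hf_cont : ∀ i, Continuous (f i)) (hf_nonneg : ∀ i x, 0 ≤ f i x)
    (x₀ y : EuclideanSpace ℝ (Fin n)) {r M : ℝ} (hM : 0 ≤ M)
    (hball : ∀ z, dg f C x₀ z < r → ∑ i, f i z ≤ M)
    (hy : dg f C x₀ y < r) : ‖y - x₀‖ ≤ Real.sqrt (M + C) * r := by
  obtain ⟨L, hLmem, hLr⟩ := exists_lt_of_csInf_lt (aux_dgSet_nonempty f C x₀ y) hy
  obtain ⟨A, B, γ, hAB, hpc, hγa, hγb, rfl⟩ := hLmem
  have hΦ := aux_Phi_continuous hC hf_cont hf_nonneg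
  set I : ℝ → ℝ := fun t => Real.sqrt (∑ i, (deriv γ t i) ^ 2 / (f i (γ t) + C)) with hIdef
  have hIfull : IntervalIntegrable I volume A B :=
    aux_full_intervalIntegrable hpc
      (Φ := fun x w => Real.sqrt (∑ i, (w i) ^ 2 / (f i x + C))) hΦ
  have hIsub : ∀ s t : ℝ, s ∈ Set.Icc A B → t ∈ Set.Icc A B →
      IntervalIntegrable I volume s t := fun s t hs ht =>
    hIfull.mono_set (Set.uIcc_subset_uIcc (by rwa [Set.uIcc_of_le hAB])
      (by rwa [Set.uIcc_of_le hAB]))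
  have hInn : ∀ s t : ℝ, s ≤ t → (0:ℝ) ≤ ∫ x in s..t, I x :=
    fun s t hst => intervalIntegral.integral_nonneg hst fun _ _ => Real.sqrt_nonneg _
  have hLgI : ∀ s t : ℝ, Lg f C γ s t = ∫ x in s..t, I x := fun s t => rfl
  have key1 : ∀ t ∈ Set.Icc A B, (∑ i, f i (γ t)) ≤ M := by
    intro t ht
    apply hball
    have hd : dg f C x₀ (γ t) ≤ Lg f C γ A t :=
      csInf_le (aux_dgSet_bddBelow f C x₀ (γ t))
        ⟨A, t, γ, ht.1, aux_restrict hpc ht.1 ht.2, hγa, rfl, rfl⟩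
    have hadj := intervalIntegral.integral_add_adjacent_intervals
      (hIsub A t (Set.left_mem_Icc.2 hAB) ht) (hIsub t B ht (Set.right_mem_Icc.2 hAB))
    have h2 : Lg f C γ A t ≤ Lg f C γ A B := by
      rw [hLgI, hLgI, ← hadj]
      have := hInn t B ht.2
      linarith
    calc dg f C x₀ (γ t) ≤ Lg f C γ A t := hd
      _ ≤ Lg f C γ A B := h2
      _ < r := hLr
  obtain ⟨m, u, hmono, h0, hlast, hC1⟩ := hpc
  have hu_mem : ∀ j : Fin (m + 1), u j ∈ Set.Icc A B := fun j =>
    ⟨h0 ▸ hmono (Fin.zero_le j), hlast ▸ hmono (Fin.le_last j)⟩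
  have piece : ∀ k : Fin m, ‖γ (u k.succ) - γ (u k.castSucc)‖ ≤
      Real.sqrt (M + C) * ∫ t in (u k.castSucc)..(u k.succ), I t := by
    intro k
    have hk := hmono k.castSucc_le_succ
    have h1 := aux_piece_displacement hk (hC1 k)
    have hnd : IntervalIntegrable (fun t => ‖deriv γ t‖) volume (u k.castSucc) (u k.succ) :=
      aux_piece_intervalIntegrable hk (hC1 k) (Φ := fun _ w => ‖w‖) continuous_snd.norm
    have hIk := hIsub _ _ (hu_mem k.castSucc) (hu_mem k.succ)
    have h2 : (∫ t in (u k.castSucc)..(u k.succ), ‖deriv γ t‖) ≤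
        ∫ t in (u k.castSucc)..(u k.succ), Real.sqrt (M + C) * I t := by
      refine intervalIntegral.integral_mono_on hk hnd (hIk.const_mul _) fun t ht => ?_
      have htAB : t ∈ Set.Icc A B :=
        ⟨(hu_mem k.castSucc).1.trans ht.1, ht.2.trans (hu_mem k.succ).2⟩
      exact aux_speed_bound hC f hf_nonneg hM (key1 t htAB) (deriv γ t)
    rw [intervalIntegral.integral_const_mul] at h2
    linarith
  have tele : ∀ j : Fin (m + 1), ‖γ (u j) - γ (u 0)‖ ≤
      Real.sqrt (M + C) * ∫ t in (u 0)..(u j), I t := by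
    intro j
    induction j using Fin.induction with
    | zero => simp
    | succ k ih =>
        have hadj := intervalIntegral.integral_add_adjacent_intervals
          (hIsub _ _ (hu_mem 0) (hu_mem k.castSucc))
          (hIsub _ _ (hu_mem k.castSucc) (hu_mem k.succ))
        calc ‖γ (u k.succ) - γ (u 0)‖
            = ‖(γ (u k.succ) - γ (u k.castSucc)) + (γ (u k.castSucc) - γ (u 0))‖ := by
              rw [sub_add_sub_cancel]
          _ ≤ ‖γ (u k.succ) - γ (u k.castSucc)‖ + ‖γ (u k.castSucc) - γ (u 0)‖ :=
              norm_add_le _ _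
          _ ≤ Real.sqrt (M + C) * (∫ t in (u k.castSucc)..(u k.succ), I t) +
              Real.sqrt (M + C) * ∫ t in (u 0)..(u k.castSucc), I t :=
              add_le_add (piece k) ih
          _ = Real.sqrt (M + C) * ∫ t in (u 0)..(u k.succ), I t := by
              rw [← hadj]; ring
  have hfin := tele (Fin.last m)
  rw [h0, hlast, hγa, hγb] at hfin
  calc ‖y - x₀‖ ≤ Real.sqrt (M + C) * ∫ t in A..B, I t := hfin
    _ ≤ Real.sqrt (M + C) * r := by
      have := Real.sqrt_nonneg (M + C)
      have hLgr : (∫ t in A..B, I t) ≤ r := le_of_lt (by rw [← hLgI]; exact hLr)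
      nlinarith


end AuxLemmas

/-- the analytic core of Theorem 1. For `C > 0` and continuous
`f_i : ℝⁿ → [0,∞)`, if the `g`-volume of the `g`-balls around `x₀` grows at least
exponentially, `Vol_g(D_r(x₀)) ≥ a e^{b r}` for all `r > 0`, then
`S(r) = sup { ∑ᵢ fᵢ(y) : y ∈ D_r(x₀) }` grows exponentially: there are
`k, ℓ, r₀ > 0` with `S(r) ≥ k e^{ℓ r}` for all `r > r₀` (trivially so when `S(r) = ∞`). -/
theorem stmt_10 {n : ℕ} (hn : 2 ≤ n) {C : ℝ} (hC : 0 < C)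
    (f : Fin n → EuclideanSpace ℝ (Fin n) → ℝ)
    (hf_cont : ∀ i, Continuous (f i)) (hf_nonneg : ∀ i x, 0 ≤ f i x)
    (x₀ : EuclideanSpace ℝ (Fin n)) {a b : ℝ} (ha : 0 < a) (hb : 0 < b)
    (hvol : ∀ r > (0 : ℝ), a * Real.exp (b * r) ≤ Volg f C {y | dg f C x₀ y < r}) :
    ∃ k > (0 : ℝ), ∃ ℓ > (0 : ℝ), ∃ r₀ > (0 : ℝ), ∀ r > r₀,
      ENNReal.ofReal (k * Real.exp (ℓ * r)) ≤ Sg f C x₀ r := by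
  have hn0 : (0:ℝ) < (n:ℝ) := by exact_mod_cast (by omega : 0 < n)
  have hnne : (n:ℝ) ≠ 0 := ne_of_gt hn0
  set ℓ : ℝ := b / n with hℓdef
  have hℓ : 0 < ℓ := div_pos hb hn0
  set K : ℝ := (C ^ (-(1:ℝ)/2)) ^ n with hKdef
  have hK0 : 0 ≤ K := pow_nonneg (Real.rpow_nonneg hC.le _) n
  set Vb : ℝ := (volume (Metric.ball (0 : EuclideanSpace ℝ (Fin n)) 1)).toReal with hVbdef
  have hVb0 : 0 ≤ Vb := ENNReal.toReal_nonneg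
  set c₁ : ℝ := K * Vb * (Real.sqrt 2) ^ n with hc₁def
  have hc₁0 : 0 ≤ c₁ := by positivity
  have hev1 : ∀ᶠ r in atTop, C ≤ Real.exp (ℓ * r) := by
    have h := Real.tendsto_exp_atTop.comp (Tendsto.const_mul_atTop hℓ tendsto_id)
    exact h.eventually_ge_atTop C
  have hev2 : ∀ᶠ r in atTop, c₁ * r ^ n * Real.exp (b / 2 * r) < a * Real.exp (b * r) := by
    have hb2 : 0 < b / 2 := half_pos hb
    have hcomp : Tendsto (fun r : ℝ => Real.exp (b / 2 * r) / (b / 2 * r) ^ n) atTop atTop :=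
      (Real.tendsto_exp_div_pow_atTop n).comp (Tendsto.const_mul_atTop hb2 tendsto_id)
    filter_upwards [hcomp.eventually_ge_atTop ((c₁ + 1) / (a * (b / 2) ^ n)),
      eventually_gt_atTop (0:ℝ)] with r h1 h2
    have hrn : (0:ℝ) < (b / 2 * r) ^ n := by positivity
    have e1 : (c₁ + 1) / (a * (b / 2) ^ n) * (b / 2 * r) ^ n ≤ Real.exp (b / 2 * r) :=
      (le_div_iff₀ hrn).1 h1
    have e2 : (c₁ + 1) * r ^ n ≤ a * Real.exp (b / 2 * r) := by
      have h3 := mul_le_mul_of_nonneg_left e1 ha.le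
      have h4 : a * ((c₁ + 1) / (a * (b / 2) ^ n) * (b / 2 * r) ^ n) = (c₁ + 1) * r ^ n := by
        have hbn : ((b:ℝ) / 2) ^ n ≠ 0 := by positivity
        field_simp [mul_pow]
        ring
      linarith [h3, h4.ge]
    have e3 : c₁ * r ^ n < (c₁ + 1) * r ^ n := by
      have := pow_pos h2 n
      nlinarith
    have e4 : Real.exp (b / 2 * r) * Real.exp (b / 2 * r) = Real.exp (b * r) := by
      rw [← Real.exp_add]; ring_nf
    have e5 : c₁ * r ^ n < a * Real.exp (b / 2 * r) := e3.trans_le e2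
    calc c₁ * r ^ n * Real.exp (b / 2 * r)
        < a * Real.exp (b / 2 * r) * Real.exp (b / 2 * r) :=
          mul_lt_mul_of_pos_right e5 (Real.exp_pos _)
      _ = a * Real.exp (b * r) := by rw [mul_assoc, e4]
  obtain ⟨N, hN⟩ := eventually_atTop.mp (hev1.and hev2)
  refine ⟨1, one_pos, ℓ, hℓ, max N 1, lt_of_lt_of_le one_pos (le_max_right _ _), fun r hr => ?_⟩
  have hr1 : 1 < r := lt_of_le_of_lt (le_max_right N 1) hr
  have hr0 : 0 < r := lt_trans one_pos hr1
  have hcond := hN r (le_of_lt (lt_of_le_of_lt (le_max_left N 1) hr))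
  by_contra hcon
  rw [not_le] at hcon
  have hSlt : Sg f C x₀ r < ⊤ := lt_of_lt_of_le hcon le_top
  have hSne : Sg f C x₀ r ≠ ⊤ := hSlt.ne
  set M := (Sg f C x₀ r).toReal with hMdef
  have hM0 : 0 ≤ M := ENNReal.toReal_nonneg
  have hMlt : M < Real.exp (ℓ * r) := by
    have h := (ENNReal.toReal_lt_toReal hSne ENNReal.ofReal_ne_top).2 hcon
    rwa [ENNReal.toReal_ofReal (by positivity), one_mul] at h
  have hball : ∀ z, dg f C x₀ z < r → ∑ i, f i z ≤ M := by
    intro z hz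
    have hle : ENNReal.ofReal (∑ i, f i z) ≤ Sg f C x₀ r := by
      simp only [Sg]
      exact le_iSup₂ (f := fun y (_ : y ∈ {y | dg f C x₀ y < r}) =>
        ENNReal.ofReal (∑ i, f i y)) z hz
    have h2 := ENNReal.toReal_mono hSne hle
    rwa [ENNReal.toReal_ofReal (Finset.sum_nonneg fun i _ => hf_nonneg i z)] at h2
  set D := {y | dg f C x₀ y < r} with hDdef
  set R := Real.sqrt (M + C) * r with hRdef
  have hR0 : 0 ≤ R := mul_nonneg (Real.sqrt_nonneg _) hr0.le
  have hsub : D ⊆ Metric.closedBall x₀ R := by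
    intro z hz
    rw [Metric.mem_closedBall, dist_eq_norm]
    exact aux_dist_le hC hf_cont hf_nonneg x₀ z hM0 hball hz
  have hvfin : volume D < ⊤ :=
    lt_of_le_of_lt (measure_mono hsub) measure_closedBall_lt_top
  have hP_nonneg : ∀ x : EuclideanSpace ℝ (Fin n), 0 ≤ ∏ i, (f i x + C) ^ (-(1:ℝ)/2) :=
    fun x => Finset.prod_nonneg fun i _ =>
      Real.rpow_nonneg (by have := hf_nonneg i x; linarith) _
  have hP_le : ∀ x : EuclideanSpace ℝ (Fin n), (∏ i, (f i x + C) ^ (-(1:ℝ)/2)) ≤ K := by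
    intro x
    calc (∏ i, (f i x + C) ^ (-(1:ℝ)/2)) ≤ ∏ _i : Fin n, C ^ (-(1:ℝ)/2) := by
          refine Finset.prod_le_prod (fun i _ =>
            Real.rpow_nonneg (by have := hf_nonneg i x; linarith) _) (fun i _ => ?_)
          exact Real.rpow_le_rpow_of_nonpos hC (by have := hf_nonneg i x; linarith)
            (by norm_num)
      _ = K := by rw [Finset.prod_const, Finset.card_univ, Fintype.card_fin]
  have hPcont : Continuous fun x : EuclideanSpace ℝ (Fin n) =>
      ∏ i, (f i x + C) ^ (-(1:ℝ)/2) := by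
    refine continuous_finset_prod _ fun i _ => ?_
    refine ((hf_cont i).add continuous_const).rpow_const fun x => Or.inl ?_
    have := hf_nonneg i x; exact (by linarith : (0:ℝ) < f i x + C).ne'
  have hKint : IntegrableOn (fun _ => K) D volume := integrableOn_const hvfin.ne
  have hPint : IntegrableOn (fun x => ∏ i, (f i x + C) ^ (-(1:ℝ)/2)) D volume := by
    refine Integrable.mono' hKint hPcont.aestronglyMeasurable (ae_of_all _ fun x => ?_)
    rw [Real.norm_eq_abs, abs_of_nonneg (hP_nonneg x)]
    exact hP_le x
  have hVolg_le : Volg f C D ≤ K * (volume D).toReal := by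
    have h1 : Volg f C D ≤ ∫ _x in D, K := by
      simp only [Volg]
      exact integral_mono hPint hKint fun x => hP_le x
    rwa [setIntegral_const, smul_eq_mul, mul_comm] at h1
  have hvb : (volume D).toReal ≤ R ^ n * Vb := by
    have hfr : Module.finrank ℝ (EuclideanSpace ℝ (Fin n)) = n := finrank_euclideanSpace_fin
    have h1 : volume D ≤ ENNReal.ofReal (R ^ n) *
        volume (Metric.ball (0 : EuclideanSpace ℝ (Fin n)) 1) := by
      refine le_trans (measure_mono hsub) ?_
      rw [Measure.addHaar_closedBall volume x₀ hR0, hfr]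
    have hne : ENNReal.ofReal (R ^ n) *
        volume (Metric.ball (0 : EuclideanSpace ℝ (Fin n)) 1) ≠ ⊤ :=
      ENNReal.mul_ne_top ENNReal.ofReal_ne_top measure_ball_lt_top.ne
    have h2 := ENNReal.toReal_mono hne h1
    rwa [ENNReal.toReal_mul, ENNReal.toReal_ofReal (by positivity)] at h2
  have hch : a * Real.exp (b * r) ≤ K * R ^ n * Vb := by
    calc a * Real.exp (b * r) ≤ Volg f C D := hvol r hr0
      _ ≤ K * (volume D).toReal := hVolg_le
      _ ≤ K * (R ^ n * Vb) := mul_le_mul_of_nonneg_left hvb hK0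
      _ = K * R ^ n * Vb := by ring
  have hsqexp : Real.sqrt (Real.exp (ℓ * r)) = Real.exp (ℓ * r / 2) := by
    rw [show Real.exp (ℓ * r) = Real.exp (ℓ * r / 2) ^ 2 from by
      rw [sq, ← Real.exp_add]; ring_nf]
    exact Real.sqrt_sq (Real.exp_nonneg _)
  have hsq : Real.sqrt (M + C) ≤ Real.sqrt 2 * Real.exp (ℓ * r / 2) := by
    have h1 : M + C ≤ 2 * Real.exp (ℓ * r) := by linarith [hcond.1, hMlt]
    have h2 := Real.sqrt_le_sqrt h1
    rwa [Real.sqrt_mul (by norm_num : (0:ℝ) ≤ 2), hsqexp] at h2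
  have hRn : R ^ n ≤ (Real.sqrt 2) ^ n * Real.exp (b / 2 * r) * r ^ n := by
    have h1 : R ≤ Real.sqrt 2 * Real.exp (ℓ * r / 2) * r :=
      mul_le_mul_of_nonneg_right hsq hr0.le
    have h2 : R ^ n ≤ (Real.sqrt 2 * Real.exp (ℓ * r / 2) * r) ^ n :=
      pow_le_pow_left₀ hR0 h1 n
    have h3 : (Real.exp (ℓ * r / 2)) ^ n = Real.exp (b / 2 * r) := by
      rw [← Real.exp_nat_mul]
      congr 1
      field_simp [hℓdef]
      rw [hℓdef]; field_simp
    calc R ^ n ≤ (Real.sqrt 2 * Real.exp (ℓ * r / 2) * r) ^ n := h2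
      _ = (Real.sqrt 2) ^ n * (Real.exp (ℓ * r / 2)) ^ n * r ^ n := by
          rw [mul_pow, mul_pow]
      _ = (Real.sqrt 2) ^ n * Real.exp (b / 2 * r) * r ^ n := by rw [h3]
  have final : a * Real.exp (b * r) ≤ c₁ * r ^ n * Real.exp (b / 2 * r) := by
    calc a * Real.exp (b * r) ≤ K * R ^ n * Vb := hch
      _ ≤ K * ((Real.sqrt 2) ^ n * Real.exp (b / 2 * r) * r ^ n) * Vb := by
          refine mul_le_mul_of_nonneg_right (mul_le_mul_of_nonneg_left hRn hK0) hVb0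
      _ = c₁ * r ^ n * Real.exp (b / 2 * r) := by rw [hc₁def]; ring
  exact absurd final (not_le.2 hcond.2)
end
end
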